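/- arXiv:2012.07629 — 8 statements merged into one kernel-verified Lean document; each statement's English description precedes it below -/
import Mathlib

section
/- In the point-circle incidence graph of a finite Möbius plane of order q, the distance between two distinct points is 2, the distance between a point P and a circle a is 1 if P lies on a and 3 otherwise, and the distance between two distinct circles is 2 if they meet and 4 if they are disjoint. -/
open Finset

/-- A Möbius plane on a point type `P`: circles are finite point sets
satisfying the four Möbius plane axioms. -/
structure MobiusPlane (P : Type*) [DecidableEq P] where
  circles : Finset (Finset P)
  ax1 : ∀ A B C : P, A ≠ B → A ≠ C → B ≠ C →
    ∃! z, z ∈ circles ∧ A ∈ z ∧ B ∈ z ∧ C ∈ z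
  ax2 : ∀ z ∈ circles, ∀ p ∈ z, ∀ q : P, q ∉ z →
    ∃! z', z' ∈ circles ∧ p ∈ z' ∧ q ∈ z' ∧ z ∩ z' = {p}
  ax3 : circles.Nonempty ∧ ∀ z ∈ circles, 3 ≤ z.card
  ax4 : ∀ z ∈ circles, ∃ x : P, x ∉ z

/-- A finite Möbius plane has order `q` if every circle has exactly `q + 1` points. -/
def MobiusPlane.HasOrder {P : Type*} [DecidableEq P] (M : MobiusPlane P) (q : ℕ) : Prop :=
  ∀ z ∈ M.circles, z.card = q + 1

/-- The point–circle incidence graph of a Möbius plane: vertices are the points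
and the circles, a point is adjacent to a circle iff it lies on it. -/
def MobiusPlane.incGraph {P : Type*} [DecidableEq P] (M : MobiusPlane P) :
    SimpleGraph (P ⊕ {z // z ∈ M.circles}) where
  Adj v w :=
    (∃ p z, v = Sum.inl p ∧ w = Sum.inr z ∧ p ∈ z.1) ∨
    (∃ p z, v = Sum.inr z ∧ w = Sum.inl p ∧ p ∈ z.1)
  symm := by
    constructor
    intro v w h
    rcases h with ⟨p, z, h1, h2, h3⟩ | ⟨p, z, h1, h2, h3⟩
    · exact Or.inr ⟨p, z, h2, h1, h3⟩
    · exact Or.inl ⟨p, z, h2, h1, h3⟩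
  loopless := by
    constructor
    intro v h
    rcases h with ⟨p, z, h1, h2, _⟩ | ⟨p, z, h1, h2, _⟩ <;> subst h1 <;> simp_all

/-! The incidence graph is bipartite (points against circles), so the parity of a distance is
fixed by the sides of its ends, and a walk is a shortest one as soon as no walk is shorter by
two. Any two points lie on a common circle (start from any circle and apply `ax2` twice), which
gives walks of lengths 2, 3 and 4 in the three cases. Nothing shorter exists: a point off a
circle is not adjacent to it, and two disjoint circles have no common neighbour. -/

namespace SimpleGraph

variable {V : Type*} {G : SimpleGraph V} {u v : V}

theorem dist_eq_two_iff :
    G.dist u v = 2 ↔ u ≠ v ∧ ¬G.Adj u v ∧ (G.commonNeighbors u v).Nonempty := by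
  rw [dist, ENat.toNat_eq_iff two_ne_zero]
  exact edist_eq_two_iff

theorem Coloring.even_dist_iff_congr (c : G.Coloring Bool) (h : G.Reachable u v) :
    Even (G.dist u v) ↔ (c u ↔ c v) := by
  obtain ⟨p, hp⟩ := h.exists_walk_length_eq_dist
  rw [← hp, c.even_length_iff_congr]

theorem Coloring.dist_eq_length_of_length_le (c : G.Coloring Bool) (p : G.Walk u v)
    (h : p.length ≤ G.dist u v + 1) : G.dist u v = p.length := by
  have hpar : Even (G.dist u v) ↔ Even p.length := by
    rw [c.even_dist_iff_congr p.reachable, c.even_length_iff_congr]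
  rw [Nat.even_iff, Nat.even_iff] at hpar
  have hle := dist_le p
  omega

end SimpleGraph

namespace MobiusPlane

open SimpleGraph

variable {P : Type*} [DecidableEq P] (M : MobiusPlane P)

theorem nonempty_of_mem_circles {z : Finset P} (hz : z ∈ M.circles) : z.Nonempty :=
  card_pos.mp (by linarith [M.ax3.2 z hz])

theorem exists_mem_circles_mem_mem (p r : P) :
    ∃ z ∈ M.circles, p ∈ z ∧ r ∈ z := by
  have through_point : ∃ z ∈ M.circles, p ∈ z := by
    obtain ⟨z, hz⟩ := M.ax3.1
    by_cases hp : p ∈ z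
    · exact ⟨z, hz, hp⟩
    obtain ⟨s, hs⟩ := M.nonempty_of_mem_circles hz
    obtain ⟨z', ⟨hz', -, hp', -⟩, -⟩ := M.ax2 z hz s hs p hp
    exact ⟨z', hz', hp'⟩
  obtain ⟨z, hz, hp⟩ := through_point
  by_cases hr : r ∈ z
  · exact ⟨z, hz, hp, hr⟩
  obtain ⟨z', ⟨hz', hp', hr', -⟩, -⟩ := M.ax2 z hz p hp r hr
  exact ⟨z', hz', hp', hr'⟩

variable {M}

@[simp]
theorem incGraph_adj_inl_inr {p : P} {z : {z // z ∈ M.circles}} :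
    M.incGraph.Adj (.inl p) (.inr z) ↔ p ∈ z.1 := by
  simp [incGraph]

@[simp]
theorem incGraph_adj_inr_inl {p : P} {z : {z // z ∈ M.circles}} :
    M.incGraph.Adj (.inr z) (.inl p) ↔ p ∈ z.1 := by
  simp [incGraph]

@[simp]
theorem not_incGraph_adj_inr_inr {z₁ z₂ : {z // z ∈ M.circles}} :
    ¬M.incGraph.Adj (.inr z₁) (.inr z₂) := by
  simp [incGraph]

variable (M)

def incGraphColoring : M.incGraph.Coloring Bool :=
  Coloring.mk Sum.isLeft fun {v w} h => by
    rcases h with ⟨p, z, rfl, rfl, -⟩ | ⟨p, z, rfl, rfl, -⟩ <;> simp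

theorem incGraph_commonNeighbors_inr_nonempty_iff {z₁ z₂ : {z // z ∈ M.circles}} :
    (M.incGraph.commonNeighbors (.inr z₁) (.inr z₂)).Nonempty ↔ (z₁.1 ∩ z₂.1).Nonempty := by
  constructor
  · rintro ⟨(p | z), h₁, h₂⟩
    · exact ⟨p, mem_inter.mpr ⟨incGraph_adj_inr_inl.mp h₁, incGraph_adj_inr_inl.mp h₂⟩⟩
    · exact absurd h₁ not_incGraph_adj_inr_inr
  · rintro ⟨p, hp⟩
    rw [mem_inter] at hp
    exact ⟨.inl p, incGraph_adj_inr_inl.mpr hp.1, incGraph_adj_inr_inl.mpr hp.2⟩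

theorem exists_incGraph_walk_inl_inl (p r : P) :
    ∃ w : M.incGraph.Walk (.inl p) (.inl r), w.length = 2 := by
  obtain ⟨z, hz, hp, hr⟩ := M.exists_mem_circles_mem_mem p r
  exact ⟨.cons ((incGraph_adj_inl_inr (z := ⟨z, hz⟩)).mpr hp)
    (.cons (incGraph_adj_inr_inl.mpr hr) .nil), rfl⟩

theorem incGraph_dist_inl_inl {p₁ p₂ : P} (hne : p₁ ≠ p₂) :
    M.incGraph.dist (.inl p₁) (.inl p₂) = 2 := by
  obtain ⟨w, hw⟩ := M.exists_incGraph_walk_inl_inl p₁ p₂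
  have hpos := w.reachable.pos_dist_of_ne (Sum.inl_injective.ne hne)
  rw [← hw]
  exact M.incGraphColoring.dist_eq_length_of_length_le w (by omega)

theorem incGraph_dist_inl_inr_of_mem {p : P} {z : {z // z ∈ M.circles}} (hp : p ∈ z.1) :
    M.incGraph.dist (.inl p) (.inr z) = 1 :=
  dist_eq_one_iff_adj.mpr (incGraph_adj_inl_inr.mpr hp)

theorem incGraph_dist_inl_inr_of_notMem {p : P} {z : {z // z ∈ M.circles}} (hp : p ∉ z.1) :
    M.incGraph.dist (.inl p) (.inr z) = 3 := by
  obtain ⟨r, hr⟩ := M.nonempty_of_mem_circles z.2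
  obtain ⟨w, hw⟩ := M.exists_incGraph_walk_inl_inl p r
  let w' := w.concat (incGraph_adj_inl_inr.mpr hr)
  have hlt := w'.reachable.one_lt_dist_of_ne_of_not_adj Sum.inl_ne_inr
    (incGraph_adj_inl_inr.not.mpr hp)
  have hw' : w'.length = 3 := by simp [w', hw]
  rw [← hw']
  exact M.incGraphColoring.dist_eq_length_of_length_le w' (by omega)

theorem incGraph_dist_inr_inr_of_inter_nonempty {z₁ z₂ : {z // z ∈ M.circles}} (hne : z₁ ≠ z₂)
    (hmeet : (z₁.1 ∩ z₂.1).Nonempty) : M.incGraph.dist (.inr z₁) (.inr z₂) = 2 :=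
  dist_eq_two_iff.mpr ⟨Sum.inr_injective.ne hne, not_incGraph_adj_inr_inr,
    (M.incGraph_commonNeighbors_inr_nonempty_iff).mpr hmeet⟩

theorem incGraph_dist_inr_inr_of_inter_eq_empty {z₁ z₂ : {z // z ∈ M.circles}} (hne : z₁ ≠ z₂)
    (hdisj : z₁.1 ∩ z₂.1 = ∅) : M.incGraph.dist (.inr z₁) (.inr z₂) = 4 := by
  obtain ⟨p, hp⟩ := M.nonempty_of_mem_circles z₁.2
  obtain ⟨r, hr⟩ := M.nonempty_of_mem_circles z₂.2
  obtain ⟨w, hw⟩ := M.exists_incGraph_walk_inl_inl p r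
  let w' := Walk.cons (incGraph_adj_inr_inl.mpr hp) (w.concat (incGraph_adj_inl_inr.mpr hr))
  have hw' : w'.length = 4 := by simp [w', hw]
  have hlt := w'.reachable.one_lt_dist_of_ne_of_not_adj (Sum.inr_injective.ne hne)
    not_incGraph_adj_inr_inr
  have hne2 : M.incGraph.dist (.inr z₁) (.inr z₂) ≠ 2 := fun h2 => by
    have hmeet := (dist_eq_two_iff.mp h2).2.2
    simpa [hdisj] using (M.incGraph_commonNeighbors_inr_nonempty_iff).mp hmeet
  rw [← hw']
  exact M.incGraphColoring.dist_eq_length_of_length_le w' (by omega)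

end MobiusPlane

theorem incGraph_distances_general {P : Type*} [DecidableEq P]
    (M : MobiusPlane P) :
    (∀ p₁ p₂ : P, p₁ ≠ p₂ →
      M.incGraph.dist (Sum.inl p₁) (Sum.inl p₂) = 2) ∧
    (∀ (p : P) (z : {z // z ∈ M.circles}),
      (p ∈ z.1 → M.incGraph.dist (Sum.inl p) (Sum.inr z) = 1) ∧
      (p ∉ z.1 → M.incGraph.dist (Sum.inl p) (Sum.inr z) = 3)) ∧
    (∀ z₁ z₂ : {z // z ∈ M.circles}, z₁ ≠ z₂ →
      ((z₁.1 ∩ z₂.1).Nonempty → M.incGraph.dist (Sum.inr z₁) (Sum.inr z₂) = 2) ∧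
      (z₁.1 ∩ z₂.1 = ∅ → M.incGraph.dist (Sum.inr z₁) (Sum.inr z₂) = 4)) :=
  ⟨fun _ _ => M.incGraph_dist_inl_inl,
    fun _ _ => ⟨M.incGraph_dist_inl_inr_of_mem, M.incGraph_dist_inl_inr_of_notMem⟩,
    fun _ _ hne => ⟨M.incGraph_dist_inr_inr_of_inter_nonempty hne,
      M.incGraph_dist_inr_inr_of_inter_eq_empty hne⟩⟩

/-- Distances in the point–circle incidence graph of a Möbius plane of order `q`:
two distinct points are at distance 2; a point and a circle are at distance 1 or 3
according to incidence; two distinct circles are at distance 2 if they meet and 4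
if they are disjoint. -/
theorem incGraph_distances {P : Type*} [DecidableEq P] [Fintype P]
    (M : MobiusPlane P) (q : ℕ) (h : M.HasOrder q) :
    (∀ p₁ p₂ : P, p₁ ≠ p₂ →
      M.incGraph.dist (Sum.inl p₁) (Sum.inl p₂) = 2) ∧
    (∀ (p : P) (z : {z // z ∈ M.circles}),
      (p ∈ z.1 → M.incGraph.dist (Sum.inl p) (Sum.inr z) = 1) ∧
      (p ∉ z.1 → M.incGraph.dist (Sum.inl p) (Sum.inr z) = 3)) ∧
    (∀ z₁ z₂ : {z // z ∈ M.circles}, z₁ ≠ z₂ →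
      ((z₁.1 ∩ z₂.1).Nonempty → M.incGraph.dist (Sum.inr z₁) (Sum.inr z₂) = 2) ∧
      (z₁.1 ∩ z₂.1 = ∅ → M.incGraph.dist (Sum.inr z₁) (Sum.inr z₂) = 4)) :=
  incGraph_distances_general M
end

section
/- Let a and b be two circles of a finite Möbius plane of order q that meet in exactly two points P and Q. Then the number of circles meeting a in two points, containing neither P nor Q, and having exactly two common points with b, is at most (1/2)·C(q-1,2)·(q-1). -/
open Finset

/-- If circles `a` and `b` meet in exactly the two points `X` and `Y`, then the
number of circles meeting `a` in two points, avoiding `X` and `Y`, and meeting `b`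
in exactly two points is at most `(1/2)·C(q-1,2)·(q-1)`. -/
theorem bisecant_bound {P : Type*} [DecidableEq P] [Fintype P]
    (M : MobiusPlane P) (q : ℕ) (h : M.HasOrder q)
    (a b : Finset P) (ha : a ∈ M.circles) (hb : b ∈ M.circles) (hab : a ≠ b)
    (X Y : P) (hXY : X ≠ Y) (hmeet : a ∩ b = {X, Y}) :
    2 * (M.circles.filter
        (fun c => (c ∩ a).card = 2 ∧ X ∉ c ∧ Y ∉ c ∧ (c ∩ b).card = 2)).card
      ≤ (q - 1).choose 2 * (q - 1) := by
  classical
  set S := M.circles.filter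
      (fun c => (c ∩ a).card = 2 ∧ X ∉ c ∧ Y ∉ c ∧ (c ∩ b).card = 2) with hSdef
  have hXa : X ∈ a := by
    have : X ∈ a ∩ b := by rw [hmeet]; simp
    exact (mem_inter.1 this).1
  have hYa : Y ∈ a := by
    have : Y ∈ a ∩ b := by rw [hmeet]; simp
    exact (mem_inter.1 this).1
  have hXb : X ∈ b := by
    have : X ∈ a ∩ b := by rw [hmeet]; simp
    exact (mem_inter.1 this).2
  have hYb : Y ∈ b := by
    have : Y ∈ a ∩ b := by rw [hmeet]; simp
    exact (mem_inter.1 this).2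
  have hXYcard : ({X, Y} : Finset P).card = 2 := by
    rw [card_insert_of_notMem (by simp [hXY]), card_singleton]
  have hacard : (a \ {X, Y}).card = q - 1 := by
    rw [card_sdiff_of_subset (by
      intro x hx
      simp only [mem_insert, mem_singleton] at hx
      rcases hx with rfl | rfl <;> assumption), h a ha, hXYcard]
    omega
  have hbcard : (b \ {X, Y}).card = q - 1 := by
    rw [card_sdiff_of_subset (by
      intro x hx
      simp only [mem_insert, mem_singleton] at hx
      rcases hx with rfl | rfl <;> assumption), h b hb, hXYcard]
    omega
  have hSprop : ∀ c ∈ S, c ∈ M.circles ∧ (c ∩ a).card = 2 ∧ X ∉ c ∧ Y ∉ c ∧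
      (c ∩ b).card = 2 := by
    intro c hc
    simpa [hSdef, mem_filter] using hc
  -- a point of c that lies on a is not on b
  have hnotb : ∀ c ∈ S, ∀ A ∈ c ∩ a, A ∉ b := by
    intro c hc A hA hAb
    obtain ⟨_, _, hcX, hcY, _⟩ := hSprop c hc
    have : A ∈ a ∩ b := mem_inter.2 ⟨(mem_inter.1 hA).2, hAb⟩
    rw [hmeet] at this
    simp only [mem_insert, mem_singleton] at this
    rcases this with rfl | rfl
    · exact hcX (mem_inter.1 hA).1
    · exact hcY (mem_inter.1 hA).1
  -- uniqueness: c determined by (c ∩ a) and a point of c ∩ b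
  have key : ∀ c ∈ S, ∀ c' ∈ S, ∀ C : P, c ∩ a = c' ∩ a → C ∈ c ∩ b → C ∈ c' ∩ b →
      c = c' := by
    intro c hc c' hc' C heq hC hC'
    obtain ⟨hcM, hca, hcX, hcY, _⟩ := hSprop c hc
    obtain ⟨hc'M, _, _, _, _⟩ := hSprop c' hc'
    obtain ⟨A, B, hAB, hABeq⟩ := card_eq_two.mp hca
    have hAc : A ∈ c ∩ a := by rw [hABeq]; simp
    have hBc : B ∈ c ∩ a := by rw [hABeq]; simp
    have hAC : A ≠ C := fun e => hnotb c hc A hAc (e ▸ (mem_inter.1 hC).2)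
    have hBC : B ≠ C := fun e => hnotb c hc B hBc (e ▸ (mem_inter.1 hC).2)
    obtain ⟨z, hz, huniq⟩ := M.ax1 A B C hAB hAC hBC
    have h1 : c = z := huniq c ⟨hcM, (mem_inter.1 hAc).1, (mem_inter.1 hBc).1,
      (mem_inter.1 hC).1⟩
    have h2 : c' = z := huniq c' ⟨hc'M, (mem_inter.1 (heq ▸ hAc)).1,
      (mem_inter.1 (heq ▸ hBc)).1, (mem_inter.1 hC').1⟩
    rw [h1, h2]
  -- the injection into pairs × points
  set g : Finset P → Finset (Finset P × P) :=
    fun c => (c ∩ b).image (fun C => (c ∩ a, C)) with hgdef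
  have hgcard : ∀ c ∈ S, (g c).card = 2 := by
    intro c hc
    obtain ⟨_, _, _, _, hcb⟩ := hSprop c hc
    rw [hgdef]
    rw [card_image_of_injective _ (fun x y e => (Prod.mk.inj e).2)]
    exact hcb
  have hdisj : ∀ c ∈ S, ∀ c' ∈ S, c ≠ c' → Disjoint (g c) (g c') := by
    intro c hc c' hc' hne
    rw [disjoint_left]
    intro p hp hp'
    simp only [hgdef, mem_image] at hp hp'
    obtain ⟨C, hC, rfl⟩ := hp
    obtain ⟨C', hC', he⟩ := hp'
    have heq : c' ∩ a = c ∩ a := (Prod.mk.inj he).1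
    have hCC : C' = C := (Prod.mk.inj he).2
    exact hne (key c hc c' hc' C heq.symm hC (hCC ▸ hC'))
  have hsub : S.biUnion g ⊆ (a \ {X, Y}).powersetCard 2 ×ˢ (b \ {X, Y}) := by
    intro p hp
    simp only [mem_biUnion] at hp
    obtain ⟨c, hc, hp⟩ := hp
    obtain ⟨hcM, hca, hcX, hcY, _⟩ := hSprop c hc
    simp only [hgdef, mem_image] at hp
    obtain ⟨C, hC, rfl⟩ := hp
    rw [mem_product]
    constructor
    · rw [mem_powersetCard]
      refine ⟨fun x hx => ?_, hca⟩
      rw [mem_sdiff]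
      refine ⟨(mem_inter.1 hx).2, fun hmem => ?_⟩
      simp only [mem_insert, mem_singleton] at hmem
      rcases hmem with rfl | rfl
      · exact hcX (mem_inter.1 hx).1
      · exact hcY (mem_inter.1 hx).1
    · rw [mem_sdiff]
      refine ⟨(mem_inter.1 hC).2, fun hmem => ?_⟩
      simp only [mem_insert, mem_singleton] at hmem
      rcases hmem with rfl | rfl
      · exact hcX (mem_inter.1 hC).1
      · exact hcY (mem_inter.1 hC).1
  have hcount : (S.biUnion g).card = 2 * S.card := by
    rw [card_biUnion hdisj]
    rw [Finset.sum_congr rfl hgcard, Finset.sum_const, smul_eq_mul, mul_comm]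
  calc 2 * S.card = (S.biUnion g).card := hcount.symm
    _ ≤ ((a \ {X, Y}).powersetCard 2 ×ˢ (b \ {X, Y})).card := card_le_card hsub
    _ = (q - 1).choose 2 * (q - 1) := by
        rw [card_product, card_powersetCard, hacard, hbcard]
end

section
/- Let a and b be two distinct circles of a finite Möbius plane of order q. Then the number of vertices v of the point-circle incidence graph (points or circles) satisfying d(v,a) ≠ d(v,b) is at least q^3/2 - 3q^2 + 11q/2 - 1. -/
open Finset

/-!
Every point of `a \ b` or `b \ a` is at distance `1` from one of the two circles and `3` from the
other, and a circle other than `a` that meets `a` but misses `b` is at distance `2` from `a` and `4`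
from `b`. Since distinct circles share at most two points, `a \ b` and `b \ a` have at least
`q - 1` points each.

The usual double countings give `q² + 1` points, `q + 1` circles through two points and `q² + q`
circles through one point. A point `A` off `b` lies on at most `(q + 1)(q + 2)/2` circles meeting
`b`, because every such circle meets `b` twice except the at most `q + 1` circles touching `b`; so
`A` lies on at least `(q² - q - 2)/2` circles missing `b`. Double counting the incidences
between `a \ b` and the circles other than `a` that meet `a` and miss `b`, each containing at most
two points of `a`, shows that there are at least `|a \ b| (q² - q - 4)/4` of them, and
symmetrically for `b`. Altogether the count is at least `max (2 (q - 1), q (q - 1)² / 2)`, which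
exceeds the bound.
-/

namespace MobiusPlane

variable {P : Type*} [DecidableEq P] (M : MobiusPlane P)

lemma two_le_of_hasOrder {q : ℕ} (hq : M.HasOrder q) : 2 ≤ q := by
  obtain ⟨z, hz⟩ := M.ax3.1
  have := M.ax3.2 z hz
  rw [hq z hz] at this
  omega

lemma card_inter_le_two {c d : Finset P} (hc : c ∈ M.circles) (hd : d ∈ M.circles)
    (hcd : c ≠ d) : #(c ∩ d) ≤ 2 := by
  by_contra! h
  obtain ⟨A, B, C, hA, hB, hC, hAB, hAC, hBC⟩ := two_lt_card_iff.mp h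
  rw [mem_inter] at hA hB hC
  exact hcd <|
    (M.ax1 A B C hAB hAC hBC).unique ⟨hc, hA.1, hB.1, hC.1⟩ ⟨hd, hA.2, hB.2, hC.2⟩

lemma exists_mem_circle (A : P) : ∃ z ∈ M.circles, A ∈ z := by
  obtain ⟨z, hz⟩ := M.ax3.1
  by_cases hA : A ∈ z
  · exact ⟨z, hz, hA⟩
  obtain ⟨p, hp⟩ := card_pos.mp (by have := M.ax3.2 z hz; omega : 0 < #z)
  obtain ⟨w, ⟨hw, -, hAw, -⟩, -⟩ := M.ax2 z hz p hp A hA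
  exact ⟨w, hw, hAw⟩

lemma exists_mem_circle_not_mem {A B : P} (hAB : A ≠ B) :
    ∃ z ∈ M.circles, A ∈ z ∧ B ∉ z := by
  obtain ⟨z, hz, hAz⟩ := M.exists_mem_circle A
  by_cases hBz : B ∈ z
  · obtain ⟨Q, hQ⟩ := M.ax4 z hz
    obtain ⟨w, ⟨hw, hAw, -, hzw⟩, -⟩ := M.ax2 z hz A hAz Q hQ
    refine ⟨w, hw, hAw, fun hBw => hAB ?_⟩
    have : B ∈ z ∩ w := mem_inter.mpr ⟨hBz, hBw⟩
    rw [hzw, mem_singleton] at this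
    exact this.symm
  · exact ⟨z, hz, hAz, hBz⟩

lemma card_circles_through_pair {q : ℕ} (hq : M.HasOrder q) {A B : P} (hAB : A ≠ B) :
    #{c ∈ M.circles | A ∈ c ∧ B ∈ c} = q + 1 := by
  obtain ⟨z, hz, hAz, hBz⟩ := M.exists_mem_circle_not_mem hAB
  obtain ⟨T, ⟨hT, hAT, hBT, hzT⟩, hT_unique⟩ := M.ax2 z hz A hAz B hBz
  have hTmem : T ∈ {c ∈ M.circles | A ∈ c ∧ B ∈ c} := mem_filter.mpr ⟨hT, hAT, hBT⟩
  -- the circles through `A` and `B` other than `T` cut `z` in exactly one further point each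
  have key : #(z.erase A) * 1 = #({c ∈ M.circles | A ∈ c ∧ B ∈ c}.erase T) * 1 := by
    refine card_mul_eq_card_mul (· ∈ ·) (fun x hx => ?_) (fun c hc => ?_)
    · obtain ⟨hxA, hxz⟩ := mem_erase.mp hx
      have hBx : B ≠ x := fun h => hBz (h ▸ hxz)
      obtain ⟨c, ⟨hc, hAc, hBc, hxc⟩, hc_unique⟩ := M.ax1 A B x hAB (Ne.symm hxA) hBx
      have hcT : c ≠ T := by
        rintro rfl
        have : x ∈ z ∩ c := mem_inter.mpr ⟨hxz, hxc⟩
        rw [hzT, mem_singleton] at this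
        exact hxA this
      refine card_eq_one_iff_existsUnique.mpr ⟨c, by simp [hc, hAc, hBc, hxc, hcT], ?_⟩
      simp only [mem_bipartiteAbove, mem_erase, mem_filter]
      exact fun d ⟨⟨_, hd, hAd, hBd⟩, hxd⟩ => hc_unique d ⟨hd, hAd, hBd, hxd⟩
    · obtain ⟨hcT, hc, hAc, hBc⟩ := by simpa only [mem_erase, mem_filter] using hc
      have hzc : #(z ∩ c) ≤ 2 := M.card_inter_le_two hz hc fun h => hBz (h ▸ hBc)
      have hA : A ∈ z ∩ c := mem_inter.mpr ⟨hAz, hAc⟩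
      have hne : z ∩ c ≠ {A} := fun h => hcT (hT_unique c ⟨hc, hAc, hBc, h⟩)
      have hgt : 1 < #(z ∩ c) := by
        by_contra! h
        exact hne (eq_singleton_iff_unique_mem.mpr ⟨hA, fun y hy => card_le_one.mp h y hy A hA⟩)
      have : (z.erase A).bipartiteBelow (· ∈ ·) c = (z ∩ c).erase A := by
        ext; simp [and_assoc]
      rw [this, card_erase_of_mem hA]
      omega
  rw [card_erase_of_mem hAz, hq z hz, card_erase_of_mem hTmem] at key
  have := card_pos.mpr ⟨T, hTmem⟩
  omega

lemma card_eq_sq_add_one [Fintype P] {q : ℕ} (hq : M.HasOrder q) :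
    Fintype.card P = q ^ 2 + 1 := by
  obtain ⟨z, hz⟩ := M.ax3.1
  obtain ⟨A, hA, B, hB, hAB⟩ := one_lt_card.mp (by have := M.ax3.2 z hz; omega : 1 < #z)
  -- every third point lies on exactly one circle through `A` and `B`
  have key : #({A, B}ᶜ : Finset P) * 1 = #{c ∈ M.circles | A ∈ c ∧ B ∈ c} * (q - 1) := by
    refine card_mul_eq_card_mul (· ∈ ·) (fun C hC => ?_) (fun c hc => ?_)
    · obtain ⟨hAC, hBC⟩ : A ≠ C ∧ B ≠ C := by simpa [eq_comm] using hC
      refine card_eq_one_iff_existsUnique.mpr ?_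
      simpa only [mem_bipartiteAbove, mem_filter, and_assoc] using M.ax1 A B C hAB hAC hBC
    · obtain ⟨hc, hAc, hBc⟩ := mem_filter.mp hc
      have : ({A, B}ᶜ : Finset P).bipartiteBelow (· ∈ ·) c = c \ {A, B} := by
        ext; simp [and_comm]
      rw [this, card_sdiff_of_subset (insert_subset hAc (singleton_subset_iff.mpr hBc)),
        card_pair hAB, hq c hc]
      omega
  rw [card_compl, card_pair hAB, M.card_circles_through_pair hq hAB] at key
  have hq2 := M.two_le_of_hasOrder hq
  have hP := card_le_univ ({A, B} : Finset P)
  rw [card_pair hAB] at hP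
  zify [(by omega : 1 ≤ q), hP] at key ⊢
  linear_combination key

lemma card_circles_through [Fintype P] {q : ℕ} (hq : M.HasOrder q) (A : P) :
    #{c ∈ M.circles | A ∈ c} = q ^ 2 + q := by
  have key : #(univ.erase A) * (q + 1) = #{c ∈ M.circles | A ∈ c} * q := by
    refine card_mul_eq_card_mul (· ∈ ·) (fun B hB => ?_) (fun c hc => ?_)
    · rw [bipartiteAbove, filter_filter]
      exact M.card_circles_through_pair hq (ne_of_mem_erase hB).symm
    · obtain ⟨hc, hAc⟩ := mem_filter.mp hc
      have : (univ.erase A).bipartiteBelow (· ∈ ·) c = c.erase A := by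
        ext; simp [and_comm]
      rw [this, card_erase_of_mem hAc, hq c hc, Nat.add_sub_cancel]
  rw [card_erase_of_mem (mem_univ A), card_univ, M.card_eq_sq_add_one hq,
    Nat.add_sub_cancel] at key
  have hq2 := M.two_le_of_hasOrder hq
  refine Nat.eq_of_mul_eq_mul_right (by omega : 0 < q) ?_
  rw [← key]
  ring

lemma card_tangent_circles_le {q : ℕ} (hq : M.HasOrder q) {b : Finset P} (hb : b ∈ M.circles)
    {A : P} (hA : A ∉ b) : #{c ∈ M.circles | A ∈ c ∧ #(c ∩ b) = 1} ≤ q + 1 := by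
  rw [← hq b hb]
  refine card_le_card_of_forall_subsingleton (fun c B => B ∈ c) (fun c hc => ?_) (fun B hB => ?_)
  · obtain ⟨-, -, h1⟩ := mem_filter.mp hc
    obtain ⟨B, hB⟩ := card_pos.mp (h1 ▸ one_pos : 0 < #(c ∩ b))
    exact ⟨B, (mem_inter.mp hB).2, (mem_inter.mp hB).1⟩
  · rintro c ⟨hc, hBc⟩ d ⟨hd, hBd⟩
    obtain ⟨hc, hAc, hc1⟩ := mem_filter.mp hc
    obtain ⟨hd, hAd, hd1⟩ := mem_filter.mp hd
    have touch : ∀ e, #(e ∩ b) = 1 → B ∈ e → b ∩ e = {B} := fun e he hBe => by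
      obtain ⟨x, hx⟩ := card_eq_one.mp he
      have : B ∈ e ∩ b := mem_inter.mpr ⟨hBe, hB⟩
      rw [hx, mem_singleton] at this
      rw [inter_comm, hx, this]
    exact (M.ax2 b hb B hB A hA).unique ⟨hc, hBc, hAc, touch c hc1 hBc⟩
      ⟨hd, hBd, hAd, touch d hd1 hBd⟩

lemma two_mul_card_circles_meeting_le {q : ℕ} (hq : M.HasOrder q) {b : Finset P}
    (hb : b ∈ M.circles) {A : P} (hA : A ∉ b) :
    2 * #{c ∈ M.circles | A ∈ c ∧ (c ∩ b).Nonempty} ≤ (q + 1) * (q + 2) := by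
  set t := {c ∈ M.circles | A ∈ c ∧ (c ∩ b).Nonempty}
  -- double count the flags `B ∈ b ∩ c`: a circle of `t` meets `b` twice unless it touches `b`
  have flags : ∑ B ∈ b, #(t.bipartiteAbove (fun B c => B ∈ c) B) = (q + 1) * (q + 1) := by
    rw [sum_const_nat fun B hB => ?_, hq b hb]
    rw [← M.card_circles_through_pair hq (ne_of_mem_of_not_mem hB hA).symm]
    congr 1
    ext c
    simp only [t, mem_bipartiteAbove, mem_filter]
    exact ⟨fun ⟨⟨hc, hAc, _⟩, hBc⟩ => ⟨hc, hAc, hBc⟩,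
      fun ⟨hc, hAc, hBc⟩ => ⟨⟨hc, hAc, B, mem_inter.mpr ⟨hBc, hB⟩⟩, hBc⟩⟩
  have per_circle : ∀ c ∈ t, 2 ≤ #(b.bipartiteBelow (fun B c => B ∈ c) c) +
      if #(c ∩ b) = 1 then 1 else 0 := fun c hc => by
    have : b.bipartiteBelow (fun B c => B ∈ c) c = c ∩ b := by
      ext; simp [and_comm]
    rw [this]
    have := card_pos.mpr (mem_filter.mp hc).2.2
    split_ifs <;> omega
  have tangents : ∑ c ∈ t, (if #(c ∩ b) = 1 then 1 else 0) ≤ q + 1 := by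
    rw [sum_boole, Nat.cast_id, filter_filter]
    refine le_trans (card_le_card fun c => ?_) (M.card_tangent_circles_le hq hb hA)
    simp only [mem_filter]
    tauto
  calc 2 * #t = ∑ _c ∈ t, 2 := by rw [sum_const, smul_eq_mul, mul_comm]
    _ ≤ ∑ c ∈ t,
          (#(b.bipartiteBelow (fun B c => B ∈ c) c) + if #(c ∩ b) = 1 then 1 else 0) :=
      sum_le_sum per_circle
    _ ≤ (q + 1) * (q + 1) + (q + 1) := by
      rw [sum_add_distrib, ← sum_card_bipartiteAbove_eq_sum_card_bipartiteBelow, flags]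
      omega
    _ = (q + 1) * (q + 2) := by ring

lemma sq_le_card_circles_missing [Fintype P] {q : ℕ} (hq : M.HasOrder q) {b : Finset P}
    (hb : b ∈ M.circles) {A : P} (hA : A ∉ b) :
    q ^ 2 ≤ 2 * #{c ∈ M.circles | A ∈ c ∧ ¬(c ∩ b).Nonempty} + q + 2 := by
  have split := card_filter_add_card_filter_not (s := {c ∈ M.circles | A ∈ c})
    (p := fun c => (c ∩ b).Nonempty)
  rw [filter_filter, filter_filter, M.card_circles_through hq] at split
  have := M.two_mul_card_circles_meeting_le hq hb hA
  nlinarith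

lemma le_card_sdiff_add_one {q : ℕ} (hq : M.HasOrder q) {a b : Finset P} (ha : a ∈ M.circles)
    (hb : b ∈ M.circles) (hab : a ≠ b) : q ≤ #(a \ b) + 1 := by
  have := card_sdiff_add_card_inter a b
  have := M.card_inter_le_two ha hb hab
  rw [hq a ha] at *
  omega

def circlesMeetingAvoiding (a b : Finset P) : Finset (Finset P) :=
  {c ∈ M.circles | c ≠ a ∧ (c ∩ a).Nonempty ∧ ¬(c ∩ b).Nonempty}

lemma card_sdiff_mul_le_card_circlesMeetingAvoiding [Fintype P] {q : ℕ} (hq : M.HasOrder q)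
    {a b : Finset P} (ha : a ∈ M.circles) (hb : b ∈ M.circles) :
    (#(a \ b) : ℚ) * ((q ^ 2 - q - 4) / 2) ≤ #(M.circlesMeetingAvoiding a b) * 2 := by
  rw [← nsmul_eq_mul, ← nsmul_eq_mul]
  refine card_nsmul_le_card_nsmul (fun A c => A ∈ c) (fun A hA => ?_) (fun c hc => ?_)
  · obtain ⟨hAa, hAb⟩ := mem_sdiff.mp hA
    have hsub : {c ∈ M.circles | A ∈ c ∧ ¬(c ∩ b).Nonempty} ⊆
        insert a ((M.circlesMeetingAvoiding a b).bipartiteAbove (fun A c => A ∈ c) A) := by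
      intro c hc
      obtain ⟨hc, hAc, hcb⟩ := mem_filter.mp hc
      rw [mem_insert, mem_bipartiteAbove, circlesMeetingAvoiding, mem_filter, or_iff_not_imp_left]
      exact fun hca => ⟨⟨hc, hca, ⟨A, mem_inter.mpr ⟨hAc, hAa⟩⟩, hcb⟩, hAc⟩
    have hmiss := M.sq_le_card_circles_missing hq hb hAb
    have hle := (card_le_card hsub).trans (card_insert_le _ _)
    have : (q : ℚ) ^ 2 ≤ 2 * (#((M.circlesMeetingAvoiding a b).bipartiteAbove
        (fun A c => A ∈ c) A) + 1) + q + 2 := by exact_mod_cast hmiss.trans (by omega)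
    linarith
  · obtain ⟨hc, hca, -⟩ := mem_filter.mp hc
    have hsub : (a \ b).bipartiteBelow (fun A c => A ∈ c) c ⊆ c ∩ a := fun A hA => by
      simp only [mem_bipartiteBelow, mem_sdiff] at hA
      exact mem_inter.mpr ⟨hA.2, hA.1.1⟩
    exact_mod_cast (card_le_card hsub).trans (M.card_inter_le_two hc ha hca)

lemma incGraph_dist_inl_inr_eq_one_iff {p : P} {c : {z // z ∈ M.circles}} :
    M.incGraph.dist (.inl p) (.inr c) = 1 ↔ p ∈ c.1 := by
  simp [SimpleGraph.dist_eq_one_iff_adj, incGraph]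

lemma incGraph_dist_inr_inr_eq_two_iff {c d : {z // z ∈ M.circles}} :
    M.incGraph.dist (.inr c) (.inr d) = 2 ↔ c ≠ d ∧ (c.1 ∩ d.1).Nonempty := by
  rw [SimpleGraph.dist, ENat.toNat_eq_iff two_ne_zero, Nat.cast_ofNat,
    SimpleGraph.edist_eq_two_iff]
  simp [incGraph, SimpleGraph.commonNeighbors, Set.Nonempty, Finset.Nonempty]

lemma card_add_card_le_ncard_dist_ne [Fintype P] (a b : {z // z ∈ M.circles}) :
    #(a.1 \ b.1) + #(b.1 \ a.1) +
        (#(M.circlesMeetingAvoiding a b) + #(M.circlesMeetingAvoiding b a)) ≤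
      Set.ncard {v | M.incGraph.dist v (.inr a) ≠ M.incGraph.dist v (.inr b)} := by
  set F := (a.1 \ b.1 ∪ b.1 \ a.1).disjSum
    ((M.circlesMeetingAvoiding a b ∪ M.circlesMeetingAvoiding b a).subtype (· ∈ M.circles))
  have hF : #F = #(a.1 \ b.1) + #(b.1 \ a.1) +
      (#(M.circlesMeetingAvoiding a b) + #(M.circlesMeetingAvoiding b a)) := by
    rw [card_disjSum, card_union_of_disjoint disjoint_sdiff_sdiff, card_subtype,
      filter_true_of_mem fun c hc => by
        rcases mem_union.mp hc with hc | hc <;> exact (mem_filter.mp hc).1,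
      card_union_of_disjoint (disjoint_left.mpr fun c hab hba =>
        (mem_filter.mp hab).2.2.2 (mem_filter.mp hba).2.2.1)]
  rw [← hF, ← Set.ncard_coe_finset]
  refine Set.ncard_le_ncard ?_
  rintro (p | c) hv heq
  · have : p ∈ a.1 ↔ p ∈ b.1 := by
      rw [← M.incGraph_dist_inl_inr_eq_one_iff, ← M.incGraph_dist_inl_inr_eq_one_iff, heq]
    simp only [F, mem_coe, inl_mem_disjSum, mem_union, mem_sdiff] at hv
    tauto
  · have : (c ≠ a ∧ (c.1 ∩ a.1).Nonempty) ↔ (c ≠ b ∧ (c.1 ∩ b.1).Nonempty) := by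
      rw [← M.incGraph_dist_inr_inr_eq_two_iff, ← M.incGraph_dist_inr_inr_eq_two_iff, heq]
    simp only [F, mem_coe, inr_mem_disjSum, mem_subtype, mem_union, circlesMeetingAvoiding,
      mem_filter, ne_eq, Subtype.coe_inj] at hv
    tauto

end MobiusPlane

/-- For two distinct circles `a`, `b`, the number of vertices of the incidence graph
at different distances from `a` and from `b` is at least `q³/2 - 3q² + 11q/2 - 1`. -/
theorem hyperedge_lower_bound {P : Type*} [DecidableEq P] [Fintype P]
    (M : MobiusPlane P) (q : ℕ) (h : M.HasOrder q)
    (a b : {z // z ∈ M.circles}) (hab : a ≠ b) :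
    (q : ℚ) ^ 3 / 2 - 3 * (q : ℚ) ^ 2 + 11 * (q : ℚ) / 2 - 1 ≤
      (Set.ncard {v : P ⊕ {z // z ∈ M.circles} |
        M.incGraph.dist v (Sum.inr a) ≠ M.incGraph.dist v (Sum.inr b)} : ℚ) := by
  have hab' : a.1 ≠ b.1 := Subtype.val_injective.ne hab
  have hsa : (q : ℚ) ≤ #(a.1 \ b.1) + 1 := by
    exact_mod_cast M.le_card_sdiff_add_one h a.2 b.2 hab'
  have hsb : (q : ℚ) ≤ #(b.1 \ a.1) + 1 := by
    exact_mod_cast M.le_card_sdiff_add_one h b.2 a.2 hab'.symm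
  have hGa := M.card_sdiff_mul_le_card_circlesMeetingAvoiding h a.2 b.2
  have hGb := M.card_sdiff_mul_le_card_circlesMeetingAvoiding h b.2 a.2
  refine le_trans ?_ (Nat.cast_le.mpr (M.card_add_card_le_ncard_dist_ne a b))
  push_cast
  have hq2 : (2 : ℚ) ≤ q := by exact_mod_cast M.two_le_of_hasOrder h
  nlinarith [mul_le_mul_of_nonneg_right hsa (by nlinarith : (0 : ℚ) ≤ q ^ 2 - q),
    mul_le_mul_of_nonneg_right hsb (by nlinarith : (0 : ℚ) ≤ q ^ 2 - q)]
end

section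
/- Let M be a finite Möbius plane of order q ≥ 3, P a point of M, and let P1 and P2 be two distinct parallel classes of the affine residue of M at P (i.e., two maximal families of circles through P pairwise tangent at P, each of size q). Let a ∈ P1 and b ∈ P2. Then the set S = (P1 ∪ P2) \ {a,b}, of cardinality 2q-2, resolves the set of points of the incidence graph: for any two distinct points X and Y there is a circle s ∈ S with d(X,s) ≠ d(Y,s). -/
open Finset

/-- Two distinct parallel classes at a point `p` (families of `q` circles through `p`
pairwise tangent at `p`), with one circle removed from each, give a set of `2q - 2`
circles resolving the point set: any two distinct points lie on exactly one member
of `S` for some `s ∈ S` (equivalently have different distances to `s` in the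
incidence graph). -/
theorem two_pencils_resolve_points {P : Type*} [DecidableEq P] [Fintype P]
    (M : MobiusPlane P) (q : ℕ) (hq : 3 ≤ q) (h : M.HasOrder q)
    (p : P) (P1 P2 : Finset (Finset P))
    (hP1 : P1 ⊆ M.circles) (hP2 : P2 ⊆ M.circles)
    (hc1 : P1.card = q) (hc2 : P2.card = q)
    (hp1 : ∀ z ∈ P1, p ∈ z) (hp2 : ∀ z ∈ P2, p ∈ z)
    (ht1 : ∀ z ∈ P1, ∀ z' ∈ P1, z ≠ z' → z ∩ z' = {p})
    (ht2 : ∀ z ∈ P2, ∀ z' ∈ P2, z ≠ z' → z ∩ z' = {p})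
    (hne : P1 ≠ P2)
    (a : Finset P) (ha : a ∈ P1) (b : Finset P) (hb : b ∈ P2) :
    ((P1 ∪ P2) \ {a, b}).card = 2 * q - 2 ∧
    ∀ X Y : P, X ≠ Y → ∃ s ∈ (P1 ∪ P2) \ {a, b},
      (X ∈ s ∧ Y ∉ s) ∨ (X ∉ s ∧ Y ∈ s) := by
  classical
  have haC : a ∈ M.circles := hP1 ha
  have hbC : b ∈ M.circles := hP2 hb
  have hpa : p ∈ a := hp1 a ha
  -- two circles sharing three distinct points are equal
  have h3 : ∀ z ∈ M.circles, ∀ z' ∈ M.circles, ∀ A B C : P,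
      A ≠ B → A ≠ C → B ≠ C → A ∈ z → B ∈ z → C ∈ z →
      A ∈ z' → B ∈ z' → C ∈ z' → z = z' := by
    intro z hz z' hz' A B C hAB hAC hBC hA hB hC hA' hB' hC'
    obtain ⟨u, -, hu⟩ := M.ax1 A B C hAB hAC hBC
    rw [hu z ⟨hz, hA, hB, hC⟩, hu z' ⟨hz', hA', hB', hC'⟩]
  -- uniqueness of tangent circle
  have tuniq : ∀ z ∈ M.circles, p ∈ z → ∀ y, y ∉ z →
      ∀ w ∈ M.circles, ∀ w' ∈ M.circles,
      p ∈ w → y ∈ w → z ∩ w = {p} → p ∈ w' → y ∈ w' → z ∩ w' = {p} → w = w' := by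
    intro z hz hpz y hy w hw w' hw' h1 h2 hh3 h1' h2' h3'
    obtain ⟨u, -, hu⟩ := M.ax2 z hz p hpz y hy
    rw [hu w ⟨hw, h1, h2, hh3⟩, hu w' ⟨hw', h1', h2', h3'⟩]
  -- cardinality of the union of a pencil of pairwise tangent circles at p
  have unioncard : ∀ F : Finset (Finset P), F.Nonempty → F ⊆ M.circles →
      (∀ z ∈ F, p ∈ z) → (∀ z ∈ F, ∀ z' ∈ F, z ≠ z' → z ∩ z' = {p}) →
      (F.biUnion id).card = F.card * q + 1 := by
    intro F hFne hF hpF htF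
    have hdisj : ∀ z ∈ F, ∀ z' ∈ F, z ≠ z' → Disjoint (z.erase p) (z'.erase p) := by
      intro z hz z' hz' hne'
      rw [Finset.disjoint_left]
      intro x hx hx'
      have hxz : x ∈ z ∩ z' := mem_inter.2 ⟨mem_of_mem_erase hx, mem_of_mem_erase hx'⟩
      rw [htF z hz z' hz' hne'] at hxz
      exact (ne_of_mem_erase hx) (mem_singleton.1 hxz)
    have heq : F.biUnion id = insert p (F.biUnion (fun z => z.erase p)) := by
      ext x
      simp only [mem_biUnion, mem_insert, id_eq, mem_erase]
      constructor
      · rintro ⟨z, hz, hx⟩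
        rcases eq_or_ne x p with rfl | hxp
        · exact Or.inl rfl
        · exact Or.inr ⟨z, hz, hxp, hx⟩
      · rintro (rfl | ⟨z, hz, -, hx⟩)
        · obtain ⟨z, hz⟩ := hFne
          exact ⟨z, hz, hpF z hz⟩
        · exact ⟨z, hz, hx⟩
    rw [heq, card_insert_of_notMem (by simp), Finset.card_biUnion hdisj]
    have hce : ∀ z ∈ F, (z.erase p).card = q := by
      intro z hz
      rw [card_erase_of_mem (hpF z hz), h z (hF hz)]
      omega
    rw [Finset.sum_congr rfl hce, Finset.sum_const, smul_eq_mul]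
  -- a point outside a
  obtain ⟨x0, hx0⟩ := M.ax4 a haC
  have hx0p : x0 ≠ p := fun hh => hx0 (hh ▸ hpa)
  -- the tangent circle to a at p through x0
  obtain ⟨t, ⟨htC, hpt, hx0t, hat⟩, -⟩ := M.ax2 a haC p hpa x0 hx0
  -- unique circle through p, x0 and any other point y
  have main : ∀ y : P, y ≠ p → y ≠ x0 → ∃ z, (z ∈ M.circles ∧ p ∈ z ∧ x0 ∈ z ∧ y ∈ z) ∧
      ∀ z', z' ∈ M.circles → p ∈ z' → x0 ∈ z' → y ∈ z' → z' = z := by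
    intro y hyp hyx
    obtain ⟨z, hz, hu⟩ := M.ax1 p x0 y (Ne.symm hx0p) (Ne.symm hyp) (Ne.symm hyx)
    exact ⟨z, hz, fun z' h1 h2 hh3 h4 => hu z' ⟨h1, h2, hh3, h4⟩⟩
  choose! cir hcir hciru using main
  -- the set of circles through p and x0
  set L := M.circles.filter (fun z => p ∈ z ∧ x0 ∈ z) with hLdef
  have htL : t ∈ L := mem_filter.2 ⟨htC, hpt, hx0t⟩
  have hLcard : a.card = L.card := by
    apply Finset.card_bij (fun y _ => if y = p then t else cir y)
    · intro y hy
      by_cases hyp : y = p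
      · simpa [hyp] using htL
      · have hyx : y ≠ x0 := fun hh => hx0 (hh ▸ hy)
        obtain ⟨hcC, hcp, hcx, hcy⟩ := hcir y hyp hyx
        simp only [if_neg hyp]
        exact mem_filter.2 ⟨hcC, hcp, hcx⟩
    · intro y hy y' hy' heq'
      by_cases hyp : y = p <;> by_cases hyp' : y' = p
      · rw [hyp, hyp']
      · exfalso
        rw [if_pos hyp, if_neg hyp'] at heq'
        have hyx' : y' ≠ x0 := fun hh => hx0 (hh ▸ hy')
        have hy't : y' ∈ t := heq' ▸ (hcir y' hyp' hyx').2.2.2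
        have : y' ∈ a ∩ t := mem_inter.2 ⟨hy', hy't⟩
        rw [hat] at this
        exact hyp' (mem_singleton.1 this)
      · exfalso
        rw [if_neg hyp, if_pos hyp'] at heq'
        have hyx : y ≠ x0 := fun hh => hx0 (hh ▸ hy)
        have hyt : y ∈ t := heq' ▸ (hcir y hyp hyx).2.2.2
        have : y ∈ a ∩ t := mem_inter.2 ⟨hy, hyt⟩
        rw [hat] at this
        exact hyp (mem_singleton.1 this)
      · rw [if_neg hyp, if_neg hyp'] at heq'
        by_contra hyy'
        have hyx : y ≠ x0 := fun hh => hx0 (hh ▸ hy)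
        have hyx' : y' ≠ x0 := fun hh => hx0 (hh ▸ hy')
        obtain ⟨hcC, hcp, hcx, hcy⟩ := hcir y hyp hyx
        have hcy' : y' ∈ cir y := heq' ▸ (hcir y' hyp' hyx').2.2.2
        have : cir y = a := h3 (cir y) hcC a haC p y y' (Ne.symm hyp) (Ne.symm hyp')
          hyy' hcp hcy hcy' hpa hy hy'
        exact hx0 (this ▸ hcx)
    · intro z hz
      obtain ⟨hzC, hpz, hx0z⟩ := mem_filter.1 hz
      by_cases hza : a ∩ z = {p}
      · refine ⟨p, hpa, ?_⟩
        rw [if_pos rfl]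
        exact tuniq a haC hpa x0 hx0 t htC z hzC hpt hx0t hat hpz hx0z hza
      · have : ∃ y ∈ a ∩ z, y ≠ p := by
          by_contra hcon
          push_neg at hcon
          apply hza
          apply Finset.Subset.antisymm
          · intro u hu
            exact mem_singleton.2 (hcon u hu)
          · intro u hu
            rw [mem_singleton.1 hu]
            exact mem_inter.2 ⟨hpa, hpz⟩
        obtain ⟨y, hy, hyp⟩ := this
        obtain ⟨hya, hyz⟩ := mem_inter.1 hy
        have hyx : y ≠ x0 := fun hh => hx0 (hh ▸ hya)
        refine ⟨y, hya, ?_⟩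
        rw [if_neg hyp]
        exact (hciru y hyp hyx z hzC hpz hx0z hyz).symm
  -- count the points of the plane
  have hPcard : Fintype.card P = q * q + 1 := by
    have hcover : (Finset.univ : Finset P) = {p, x0} ∪ L.biUnion (fun z => z \ {p, x0}) := by
      apply Finset.Subset.antisymm
      · intro u _
        by_cases hup : u = p
        · exact mem_union_left _ (by simp [hup])
        by_cases hux : u = x0
        · exact mem_union_left _ (by simp [hux])
        · apply mem_union_right
          obtain ⟨hcC, hcp, hcx, hcu⟩ := hcir u hup hux
          refine mem_biUnion.2 ⟨cir u, mem_filter.2 ⟨hcC, hcp, hcx⟩, ?_⟩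
          simp [hup, hux, hcu]
      · intro u _
        exact mem_univ u
    have hdisjL : ∀ z ∈ L, ∀ z' ∈ L, z ≠ z' → Disjoint (z \ {p, x0}) (z' \ {p, x0}) := by
      intro z hz z' hz' hne'
      obtain ⟨hzC, hpz, hxz⟩ := mem_filter.1 hz
      obtain ⟨hzC', hpz', hxz'⟩ := mem_filter.1 hz'
      rw [Finset.disjoint_left]
      intro u hu hu'
      obtain ⟨huz, hun⟩ := mem_sdiff.1 hu
      obtain ⟨huz', -⟩ := mem_sdiff.1 hu'
      simp only [mem_insert, mem_singleton, not_or] at hun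
      exact hne' (h3 z hzC z' hzC' p x0 u (Ne.symm hx0p) (Ne.symm hun.1) (Ne.symm hun.2)
        hpz hxz huz hpz' hxz' huz')
    have hcz : ∀ z ∈ L, (z \ {p, x0}).card = q - 1 := by
      intro z hz
      obtain ⟨hzC, hpz, hxz⟩ := mem_filter.1 hz
      have hsub : ({p, x0} : Finset P) ⊆ z := by
        intro u hu
        rcases mem_insert.1 hu with rfl | hu
        · exact hpz
        · rw [mem_singleton.1 hu]; exact hxz
      rw [card_sdiff_of_subset hsub, h z hzC, card_insert_of_notMem (by simp [Ne.symm hx0p]),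
        card_singleton]
      omega
    have hdisj2 : Disjoint ({p, x0} : Finset P) (L.biUnion (fun z => z \ {p, x0})) := by
      rw [Finset.disjoint_left]
      intro u hu hu'
      obtain ⟨z, -, hz⟩ := mem_biUnion.1 hu'
      exact (mem_sdiff.1 hz).2 hu
    have hca : a.card = q + 1 := h a haC
    rw [← Finset.card_univ, hcover, card_union_of_disjoint hdisj2,
      Finset.card_biUnion hdisjL, Finset.sum_congr rfl hcz, Finset.sum_const, smul_eq_mul,
      ← hLcard, hca, card_insert_of_notMem (by simp [Ne.symm hx0p]), card_singleton]
    obtain ⟨m, rfl⟩ : ∃ m, q = m + 1 := ⟨q - 1, by omega⟩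
    simp only [Nat.add_sub_cancel]
    ring
  -- coverage of the plane by each pencil
  have hP1ne : P1.Nonempty := by rw [← card_pos, hc1]; omega
  have hP2ne : P2.Nonempty := by rw [← card_pos, hc2]; omega
  have hcov1 : ∀ x : P, ∃ z ∈ P1, x ∈ z := by
    have hcard : (P1.biUnion id).card = Fintype.card P := by
      rw [unioncard P1 hP1ne hP1 hp1 ht1, hc1, hPcard]
    have huniv := Finset.eq_univ_of_card _ hcard
    intro x
    have hx : x ∈ P1.biUnion id := huniv ▸ mem_univ x
    simpa using hx
  have hcov2 : ∀ x : P, ∃ z ∈ P2, x ∈ z := by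
    have hcard : (P2.biUnion id).card = Fintype.card P := by
      rw [unioncard P2 hP2ne hP2 hp2 ht2, hc2, hPcard]
    have huniv := Finset.eq_univ_of_card _ hcard
    intro x
    have hx : x ∈ P2.biUnion id := huniv ▸ mem_univ x
    simpa using hx
  have huniq1 : ∀ x : P, x ≠ p → ∀ z ∈ P1, ∀ z' ∈ P1, x ∈ z → x ∈ z' → z = z' := by
    intro x hxp z hz z' hz' hx hx'
    by_contra hne'
    have hxin : x ∈ z ∩ z' := mem_inter.2 ⟨hx, hx'⟩
    rw [ht1 z hz z' hz' hne'] at hxin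
    exact hxp (mem_singleton.1 hxin)
  have huniq2 : ∀ x : P, x ≠ p → ∀ z ∈ P2, ∀ z' ∈ P2, x ∈ z → x ∈ z' → z = z' := by
    intro x hxp z hz z' hz' hx hx'
    by_contra hne'
    have hxin : x ∈ z ∩ z' := mem_inter.2 ⟨hx, hx'⟩
    rw [ht2 z hz z' hz' hne'] at hxin
    exact hxp (mem_singleton.1 hxin)
  -- P1 and P2 are disjoint
  have hdisj12 : Disjoint P1 P2 := by
    rw [Finset.disjoint_left]
    intro z hz1 hz2
    have hex : ∃ z' ∈ P2, z' ∉ P1 := by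
      by_contra hcon
      push_neg at hcon
      exact hne (Finset.eq_of_subset_of_card_le hcon (by omega)).symm
    obtain ⟨z', hz'2, hz'1⟩ := hex
    have hzz' : z ≠ z' := fun hh => hz'1 (hh ▸ hz1)
    have htz : z ∩ z' = {p} := ht2 z hz2 z' hz'2 hzz'
    have htang : ∀ w ∈ P1, w ≠ z' → w ∩ z' = {p} := by
      intro w hw hwz'
      rcases eq_or_ne w z with rfl | hwz
      · exact htz
      · have h1 : z ∩ w = {p} := ht1 z hz1 w hw (Ne.symm hwz)
        apply Finset.Subset.antisymm
        · intro u hu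
          obtain ⟨hu1, hu2⟩ := mem_inter.1 hu
          by_contra hup
          rw [mem_singleton] at hup
          have huz : u ∉ z := by
            intro hc
            have : u ∈ z ∩ w := mem_inter.2 ⟨hc, hu1⟩
            rw [h1] at this
            exact hup (mem_singleton.1 this)
          exact hwz' (tuniq z (hP1 hz1) (hp1 z hz1) u huz w (hP1 hw) z' (hP2 hz'2)
            (hp1 w hw) hu1 h1 (hp2 z' hz'2) hu2 htz)
        · intro u hu
          rw [mem_singleton.1 hu]
          exact mem_inter.2 ⟨hp1 w hw, hp2 z' hz'2⟩
    have hz'1' : z' ∉ P1 := hz'1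
    have hFcard : (insert z' P1).card = q + 1 := by
      rw [card_insert_of_notMem hz'1, hc1]
    have hFsub : insert z' P1 ⊆ M.circles := by
      intro w hw
      rcases mem_insert.1 hw with heq | hw
      · subst heq; exact hP2 hz'2
      · exact hP1 hw
    have hFp : ∀ w ∈ insert z' P1, p ∈ w := by
      intro w hw
      rcases mem_insert.1 hw with heq | hw
      · subst heq; exact hp2 w hz'2
      · exact hp1 w hw
    have hFt : ∀ w ∈ insert z' P1, ∀ w' ∈ insert z' P1, w ≠ w' → w ∩ w' = {p} := by
      intro w hw w' hw' hne'
      rcases mem_insert.1 hw with heq | hwm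
      · rcases mem_insert.1 hw' with heq' | hwm'
        · exact absurd (heq.trans heq'.symm) hne'
        · subst heq
          rw [Finset.inter_comm]
          exact htang w' hwm' (Ne.symm hne')
      · rcases mem_insert.1 hw' with heq' | hwm'
        · subst heq'
          exact htang w hwm hne'
        · exact ht1 w hwm w' hwm' hne'
    have hu := unioncard (insert z' P1) ⟨z', mem_insert_self _ _⟩ hFsub hFp hFt
    have hle : ((insert z' P1).biUnion id).card ≤ Fintype.card P := Finset.card_le_univ _
    rw [hu, hFcard, hPcard] at hle
    nlinarith
  have hab : a ≠ b := fun hh => (Finset.disjoint_left.1 hdisj12 ha) (hh ▸ hb)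
  -- membership helpers
  have hmemS1 : ∀ s ∈ P1, s ≠ a → s ∈ (P1 ∪ P2) \ {a, b} := by
    intro s hs hsa
    rw [mem_sdiff]
    refine ⟨mem_union_left _ hs, ?_⟩
    simp only [mem_insert, mem_singleton, not_or]
    exact ⟨hsa, fun hh => (Finset.disjoint_left.1 hdisj12 hs) (hh ▸ hb)⟩
  have hmemS2 : ∀ s ∈ P2, s ≠ b → s ∈ (P1 ∪ P2) \ {a, b} := by
    intro s hs hsb
    rw [mem_sdiff]
    refine ⟨mem_union_right _ hs, ?_⟩
    simp only [mem_insert, mem_singleton, not_or]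
    exact ⟨fun hh => Finset.disjoint_left.1 hdisj12 ha (hh ▸ hs), hsb⟩
  constructor
  · -- cardinality
    have hsub : ({a, b} : Finset (Finset P)) ⊆ P1 ∪ P2 := by
      intro w hw
      rcases mem_insert.1 hw with rfl | hw
      · exact mem_union_left _ ha
      · rw [mem_singleton.1 hw]
        exact mem_union_right _ hb
    rw [card_sdiff_of_subset hsub, card_union_of_disjoint hdisj12, hc1, hc2,
      card_insert_of_notMem (by simp [hab]), card_singleton]
    omega
  · intro X Y hXY
    rcases eq_or_ne X p with rfl | hXp
    · -- X = p
      obtain ⟨z1, hz1, hYz1⟩ := hcov1 Y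
      have hnes : (P1 \ {a, z1}).Nonempty := by
        rw [← card_pos]
        have h1 : P1.card ≤ (P1 \ {a, z1}).card + ({a, z1} : Finset (Finset P)).card :=
          Finset.card_le_card_sdiff_add_card
      
        have h2 : ({a, z1} : Finset (Finset P)).card ≤ 2 := by
          apply le_trans (card_insert_le _ _)
          simp
        omega
      obtain ⟨s, hs⟩ := hnes
      obtain ⟨hsP1, hsn⟩ := mem_sdiff.1 hs
      simp only [mem_insert, mem_singleton, not_or] at hsn
      refine ⟨s, hmemS1 s hsP1 hsn.1, Or.inl ⟨hp1 s hsP1, ?_⟩⟩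
      intro hYs
      exact hsn.2 (huniq1 Y (Ne.symm hXY) s hsP1 z1 hz1 hYs hYz1)
    rcases eq_or_ne Y p with rfl | hYp
    · -- Y = p
      obtain ⟨z1, hz1, hXz1⟩ := hcov1 X
      have hnes : (P1 \ {a, z1}).Nonempty := by
        rw [← card_pos]
        have h1 : P1.card ≤ (P1 \ {a, z1}).card + ({a, z1} : Finset (Finset P)).card :=
          Finset.card_le_card_sdiff_add_card
        have h2 : ({a, z1} : Finset (Finset P)).card ≤ 2 := by
          apply le_trans (card_insert_le _ _)
          simp
        omega
      obtain ⟨s, hs⟩ := hnes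
      obtain ⟨hsP1, hsn⟩ := mem_sdiff.1 hs
      simp only [mem_insert, mem_singleton, not_or] at hsn
      refine ⟨s, hmemS1 s hsP1 hsn.1, Or.inr ⟨?_, hp1 s hsP1⟩⟩
      intro hXs
      exact hsn.2 (huniq1 X hXp s hsP1 z1 hz1 hXs hXz1)
    · -- X ≠ p, Y ≠ p
      obtain ⟨z1X, hz1X, hXz1X⟩ := hcov1 X
      obtain ⟨z1Y, hz1Y, hYz1Y⟩ := hcov1 Y
      obtain ⟨z2X, hz2X, hXz2X⟩ := hcov2 X
      obtain ⟨z2Y, hz2Y, hYz2Y⟩ := hcov2 Y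
      have hkey : z1X ≠ z1Y ∨ z2X ≠ z2Y := by
        by_contra hcon
        push_neg at hcon
        obtain ⟨h1, h2⟩ := hcon
        have hne' : z1X ≠ z2X := fun hh => Finset.disjoint_left.1 hdisj12 hz1X (hh ▸ hz2X)
        exact hne' (h3 z1X (hP1 hz1X) z2X (hP2 hz2X) p X Y (Ne.symm hXp) (Ne.symm hYp) hXY
          (hp1 _ hz1X) hXz1X (by rw [h1]; exact hYz1Y)
          (hp2 _ hz2X) hXz2X (by rw [h2]; exact hYz2Y))
      rcases hkey with hk | hk
      · rcases eq_or_ne z1X a with rfl | hXa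
        · refine ⟨z1Y, hmemS1 z1Y hz1Y (Ne.symm hk), Or.inr ⟨?_, hYz1Y⟩⟩
          intro hXs
          exact hk (huniq1 X hXp _ hz1X _ hz1Y hXz1X hXs)
        · refine ⟨z1X, hmemS1 z1X hz1X hXa, Or.inl ⟨hXz1X, ?_⟩⟩
          intro hYs
          exact hk (huniq1 Y hYp _ hz1X _ hz1Y hYs hYz1Y)
      · rcases eq_or_ne z2X b with rfl | hXb
        · refine ⟨z2Y, hmemS2 z2Y hz2Y (Ne.symm hk), Or.inr ⟨?_, hYz2Y⟩⟩
          intro hXs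
          exact hk (huniq2 X hXp _ hz2X _ hz2Y hXz2X hXs)
        · refine ⟨z2X, hmemS2 z2X hz2X hXb, Or.inl ⟨hXz2X, ?_⟩⟩
          intro hYs
          exact hk (huniq2 Y hYp _ hz2X _ hz2Y hYs hYz2Y)
end

section
/- Let S be a resolving set of the incidence graph of a finite Möbius plane of order q, with Z_S the set of circles in S and P_S the set of points in S. Then |Z_S| ≥ 2q - 2|S|/q, and consequently |S| ≥ 2q - 4 + 8/(q+2), so the metric dimension of a Möbius plane of order q is at least 2q-3. -/
open Finset

open Finset

namespace MobiusAux

variable {P : Type*} [DecidableEq P]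

lemma circles_eq (M : MobiusPlane P) {c c' : Finset P} (hc : c ∈ M.circles)
    (hc' : c' ∈ M.circles) {x y z : P} (hxy : x ≠ y) (hxz : x ≠ z) (hyz : y ≠ z)
    (hx : x ∈ c) (hy : y ∈ c) (hz : z ∈ c) (hx' : x ∈ c') (hy' : y ∈ c') (hz' : z ∈ c') :
    c = c' := by
  obtain ⟨w, -, hu⟩ := M.ax1 x y z hxy hxz hyz
  rw [hu c ⟨hc, hx, hy, hz⟩, hu c' ⟨hc', hx', hy', hz'⟩]

lemma exists_circle_through (M : MobiusPlane P) (A B : P) (hAB : A ≠ B) :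
    ∃ z ∈ M.circles, A ∈ z ∧ B ∈ z := by
  obtain ⟨⟨z0, hz0⟩, hcard3⟩ := M.ax3
  have h3 := hcard3 z0 hz0
  have hns : ¬ z0 ⊆ {A, B} := by
    intro hsub
    have h1 := Finset.card_le_card hsub
    have h2 : ({A, B} : Finset P).card ≤ 2 :=
      (Finset.card_insert_le _ _).trans (by simp)
    omega
  obtain ⟨C, hCz, hC⟩ := Finset.not_subset.mp hns
  simp only [Finset.mem_insert, Finset.mem_singleton, not_or] at hC
  obtain ⟨w, ⟨hw, hA, hB, -⟩, -⟩ :=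
    M.ax1 A B C hAB (Ne.symm hC.1) (Ne.symm hC.2)
  exact ⟨w, hw, hA, hB⟩

lemma adj_inl_inr (M : MobiusPlane P) {p : P} {z : {z // z ∈ M.circles}} :
    M.incGraph.Adj (Sum.inl p) (Sum.inr z) ↔ p ∈ z.1 := by
  constructor
  · rintro (⟨p', z', h1, h2, h3⟩ | ⟨p', z', h1, h2, h3⟩)
    · rw [Sum.inl.injEq] at h1; rw [Sum.inr.injEq] at h2; subst h1; subst h2; exact h3
    · simp at h1
  · intro hp
    exact Or.inl ⟨p, z, rfl, rfl, hp⟩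

lemma not_adj_inl_inl (M : MobiusPlane P) (p p' : P) :
    ¬ M.incGraph.Adj (Sum.inl p) (Sum.inl p') := by
  rintro (⟨a, b, h1, h2, h3⟩ | ⟨a, b, h1, h2, h3⟩) <;> simp_all

end MobiusAux

namespace MobiusAux

variable {P : Type*} [DecidableEq P]

lemma dist_inl_inl (M : MobiusPlane P) {p p' : P} (hne : p ≠ p') :
    M.incGraph.dist (Sum.inl p) (Sum.inl p') = 2 := by
  obtain ⟨z, hz, hpz, hp'z⟩ := exists_circle_through M p p' hne
  let w : M.incGraph.Walk (Sum.inl p) (Sum.inl p') :=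
    .cons ((adj_inl_inr M (z := ⟨z, hz⟩)).mpr hpz)
      (.cons (M.incGraph.adj_symm ((adj_inl_inr M (z := ⟨z, hz⟩)).mpr hp'z)) .nil)
  have h2 : M.incGraph.dist (Sum.inl p) (Sum.inl p') ≤ 2 := SimpleGraph.dist_le w
  have h0 : M.incGraph.dist (Sum.inl p) (Sum.inl p') ≠ 0 := by
    simp only [ne_eq, SimpleGraph.Reachable.dist_eq_zero_iff ⟨w⟩]
    simp [hne]
  have h1 : M.incGraph.dist (Sum.inl p) (Sum.inl p') ≠ 1 := by
    simp only [ne_eq, SimpleGraph.dist_eq_one_iff_adj]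
    exact not_adj_inl_inl M p p'
  omega

lemma dist_inl_inr_mem (M : MobiusPlane P) {p : P} {z : {z // z ∈ M.circles}}
    (hp : p ∈ z.1) : M.incGraph.dist (Sum.inl p) (Sum.inr z) = 1 :=
  SimpleGraph.dist_eq_one_iff_adj.mpr ((adj_inl_inr M).mpr hp)

lemma dist_inl_inr_not_mem (M : MobiusPlane P) {p : P} {z : {z // z ∈ M.circles}}
    (hp : p ∉ z.1) : M.incGraph.dist (Sum.inl p) (Sum.inr z) = 3 := by
  have hcard := (M.ax3).2 z.1 z.2
  obtain ⟨p', hp'⟩ := Finset.card_pos.mp (by omega : 0 < z.1.card)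
  have hne : p ≠ p' := fun h => hp (h ▸ hp')
  obtain ⟨z', hz', hpz', hp'z'⟩ := exists_circle_through M p p' hne
  let w : M.incGraph.Walk (Sum.inl p) (Sum.inr z) :=
    .cons ((adj_inl_inr M (z := ⟨z', hz'⟩)).mpr hpz')
      (.cons (M.incGraph.adj_symm ((adj_inl_inr M (z := ⟨z', hz'⟩)).mpr hp'z'))
        (.cons ((adj_inl_inr M).mpr hp') .nil))
  have h3 : M.incGraph.dist (Sum.inl p) (Sum.inr z) ≤ 3 := SimpleGraph.dist_le w
  have h0 : M.incGraph.dist (Sum.inl p) (Sum.inr z) ≠ 0 := by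
    simp only [ne_eq, SimpleGraph.Reachable.dist_eq_zero_iff ⟨w⟩]
    simp
  have h1 : M.incGraph.dist (Sum.inl p) (Sum.inr z) ≠ 1 := by
    simp only [ne_eq, SimpleGraph.dist_eq_one_iff_adj, adj_inl_inr]
    exact hp
  have h2 : M.incGraph.dist (Sum.inl p) (Sum.inr z) ≠ 2 := by
    intro hd
    obtain ⟨w2, hw2⟩ := SimpleGraph.Reachable.exists_walk_length_eq_dist ⟨w⟩
    rw [hd] at hw2
    cases w2 with
    | cons hadj w' =>
      cases w' with
      | nil => simp at hw2
      | cons hadj2 w'' =>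
        have hlen : w''.length = 0 := by
          simp only [SimpleGraph.Walk.length_cons] at hw2; omega
        have hend := SimpleGraph.Walk.eq_of_length_eq_zero hlen
        rcases hadj with ⟨a, b, e1, e2, -⟩ | ⟨a, b, e1, e2, -⟩
        · subst e2
          rcases hadj2 with ⟨c, d, e3, e4, -⟩ | ⟨c, d, e3, e4, -⟩
          · simp at e3
          · rw [e4] at hend; simp at hend
        · simp at e1
  omega

end MobiusAux

namespace MobiusAux

variable {P : Type*} [DecidableEq P]

lemma order_ge_two (M : MobiusPlane P) {q : ℕ} (hq : M.HasOrder q) : 2 ≤ q := by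
  obtain ⟨⟨z0, hz0⟩, hcard3⟩ := M.ax3
  have := hcard3 z0 hz0
  have := hq z0 hz0
  omega

lemma card_points (M : MobiusPlane P) [Fintype P] {q : ℕ} (hq : M.HasOrder q) :
    q ^ 2 + 1 ≤ Fintype.card P := by
  classical
  have hq2 := order_ge_two M hq
  obtain ⟨⟨z0, hz0⟩, hcard3⟩ := M.ax3
  obtain ⟨A, hA0, B, hB0, hAB⟩ := Finset.one_lt_card.mp
    (by have := hcard3 z0 hz0; omega : 1 < z0.card)
  obtain ⟨w, hw, hAw, hBw⟩ := exists_circle_through M A B hAB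
  obtain ⟨C, hC⟩ := M.ax4 w hw
  obtain ⟨z, ⟨hz, hAz, hCz, hwz⟩, -⟩ := M.ax2 w hw A hAw C hC
  have hBz : B ∉ z := by
    intro hB
    have hmem : B ∈ w ∩ z := Finset.mem_inter.mpr ⟨hBw, hB⟩
    rw [hwz, Finset.mem_singleton] at hmem
    exact hAB hmem.symm
  -- tangent circle to z at A through B
  obtain ⟨t, ⟨ht, hAt, hBt, hzt⟩, -⟩ := M.ax2 z hz A hAz B hBz
  set T : Finset (Finset P) := M.circles.filter (fun c => A ∈ c ∧ B ∈ c) with hT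
  have htT : t ∈ T := by simp [hT, ht, hAt, hBt]
  -- the injection from z.erase A into T.erase t
  set f : P → Finset P := fun x =>
    if hx : A ≠ x ∧ B ≠ x then (M.ax1 A B x hAB hx.1 hx.2).exists.choose else ∅ with hf
  have hfspec : ∀ x, A ≠ x → B ≠ x →
      f x ∈ M.circles ∧ A ∈ f x ∧ B ∈ f x ∧ x ∈ f x := by
    intro x h1 h2
    have : f x = (M.ax1 A B x hAB h1 h2).exists.choose := by
      simp [hf, dif_pos (And.intro h1 h2)]
    rw [this]
    exact (M.ax1 A B x hAB h1 h2).exists.choose_spec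
  have hcard_le : (z.erase A).card ≤ (T.erase t).card := by
    apply Finset.card_le_card_of_injOn f
    · intro x hx
      obtain ⟨hxA, hxz⟩ := Finset.mem_erase.mp hx
      have hBx : B ≠ x := fun e => hBz (e ▸ hxz)
      obtain ⟨h1, h2, h3, h4⟩ := hfspec x (Ne.symm hxA) hBx
      rw [Finset.mem_coe, Finset.mem_erase]
      constructor
      · intro e
        have hmem : x ∈ z ∩ t := Finset.mem_inter.mpr ⟨hxz, e ▸ h4⟩
        rw [hzt, Finset.mem_singleton] at hmem
        exact hxA hmem
      · simp [hT, h1, h2, h3]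
    · intro x hx y hy hxy
      by_contra hne
      obtain ⟨hxA, hxz⟩ := Finset.mem_erase.mp (by exact hx)
      obtain ⟨hyA, hyz⟩ := Finset.mem_erase.mp (by exact hy)
      have hBx : B ≠ x := fun e => hBz (e ▸ hxz)
      have hBy : B ≠ y := fun e => hBz (e ▸ hyz)
      obtain ⟨h1, h2, h3, h4⟩ := hfspec x (Ne.symm hxA) hBx
      obtain ⟨g1, g2, g3, g4⟩ := hfspec y (Ne.symm hyA) hBy
      -- f x contains A, x, y; so does z; hence f x = z, but B ∈ f x, B ∉ z
      have : f x = z := circles_eq M h1 hz (Ne.symm hxA) (Ne.symm hyA) hne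
        h2 h4 (by rw [hxy]; exact g4) hAz hxz hyz
      exact hBz (this ▸ h3)
  have hTcard : q + 1 ≤ T.card := by
    have h1 : (z.erase A).card = q := by
      rw [Finset.card_erase_of_mem hAz, hq z hz]; omega
    have h2 : (T.erase t).card = T.card - 1 := Finset.card_erase_of_mem htT
    have h3 : 1 ≤ T.card := Finset.card_pos.mpr ⟨t, htT⟩
    omega
  -- circles in T pairwise meet only in {A, B}
  have hdisj : ∀ c ∈ T, ∀ c' ∈ T, c ≠ c' →
      Disjoint (c \ {A, B}) (c' \ {A, B}) := by
    intro c hc c' hc' hne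
    rw [Finset.disjoint_left]
    intro x hx hx'
    obtain ⟨hxc, hxAB⟩ := Finset.mem_sdiff.mp hx
    obtain ⟨hxc', -⟩ := Finset.mem_sdiff.mp hx'
    simp only [Finset.mem_insert, Finset.mem_singleton, not_or] at hxAB
    simp only [hT, Finset.mem_filter] at hc hc'
    exact hne (circles_eq M hc.1 hc'.1 hAB (Ne.symm hxAB.1) (Ne.symm hxAB.2)
      hc.2.1 hc.2.2 hxc hc'.2.1 hc'.2.2 hxc')
  set U : Finset P := T.biUnion (fun c => c \ {A, B}) with hU
  have hUcard : U.card = T.card * (q - 1) := by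
    rw [hU, Finset.card_biUnion hdisj]
    rw [Finset.sum_congr rfl (fun c hc => ?_), Finset.sum_const, smul_eq_mul]
    have hcmem := (Finset.mem_filter.mp hc)
    have hsub : ({A, B} : Finset P) ⊆ c := by
      intro x hx
      simp only [Finset.mem_insert, Finset.mem_singleton] at hx
      rcases hx with rfl | rfl
      · exact hcmem.2.1
      · exact hcmem.2.2
    rw [Finset.card_sdiff_of_subset hsub, hq c hcmem.1, Finset.card_insert_of_notMem (by simp [hAB]),
      Finset.card_singleton]
    omega
  have hAU : A ∉ U := by
    simp only [hU, Finset.mem_biUnion, not_exists]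
    intro c hc
    simp at hc
  have hBU : B ∉ U := by
    simp only [hU, Finset.mem_biUnion, not_exists]
    intro c hc
    simp at hc
  have hfinal : U.card + 2 ≤ Fintype.card P := by
    have : (insert A (insert B U)).card ≤ Fintype.card P :=
      Finset.card_le_card (Finset.subset_univ _) |>.trans_eq (by rw [Finset.card_univ])
    rw [Finset.card_insert_of_notMem (by simp [hAU, hAB]),
      Finset.card_insert_of_notMem hBU] at this
    omega
  have hmul : (q + 1) * (q - 1) ≤ T.card * (q - 1) :=
    Nat.mul_le_mul_right _ hTcard
  obtain ⟨r, rfl⟩ : ∃ r, q = r + 2 := ⟨q - 2, by omega⟩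
  have he : (r + 2 + 1) * (r + 2 - 1) = (r + 2) ^ 2 - 1 := by
    have : r + 2 - 1 = r + 1 := by omega
    rw [this]; ring_nf; omega
  omega

end MobiusAux

/-- Lower bounds for a resolving set `S` of the incidence graph of a Möbius plane of
order `q`: with `Z_S` the circles of `S`, `|Z_S| ≥ 2q - 2|S|/q`, consequently
`|S| ≥ 2q - 4 + 8/(q+2)`, so the metric dimension is at least `2q - 3`. -/
theorem resolving_set_lower_bound {P : Type*} [DecidableEq P] [Fintype P]
    (M : MobiusPlane P) (q : ℕ) (h : M.HasOrder q)
    (S : Finset (P ⊕ {z // z ∈ M.circles}))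
    (hS : ∀ u v : P ⊕ {z // z ∈ M.circles}, u ≠ v →
      ∃ s ∈ S, M.incGraph.dist u s ≠ M.incGraph.dist v s) :
    (2 * (q : ℚ) - 2 * (S.card : ℚ) / (q : ℚ)
        ≤ ((S.filter (fun v => v.isRight = true)).card : ℚ)) ∧
    (2 * (q : ℚ) - 4 + 8 / ((q : ℚ) + 2) ≤ (S.card : ℚ)) ∧
    (2 * (q : ℤ) - 3 ≤ (S.card : ℤ)) := by
  classical
  have hq2 : 2 ≤ q := MobiusAux.order_ge_two M h
  have hP : q ^ 2 + 1 ≤ Fintype.card P := MobiusAux.card_points M h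
  set Z : Finset {z // z ∈ M.circles} := Finset.univ.filter (fun z => Sum.inr z ∈ S) with hZ
  set Pts : Finset P := Finset.univ.filter (fun p => Sum.inl p ∈ S) with hPts
  set Out : Finset P := Finset.univ.filter (fun p => Sum.inl p ∉ S) with hOut
  set tr : P → Finset {z // z ∈ M.circles} := fun p => Z.filter (fun z => p ∈ z.1) with htr
  have hZcard : Z.card = (S.filter (fun v => v.isRight = true)).card := by
    apply Finset.card_bij (fun z _ => Sum.inr z)
    · intro z hz
      simp only [hZ, Finset.mem_filter, Finset.mem_univ, true_and] at hz
      simp [hz]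
    · intro a ha b hb hab; simpa using hab
    · intro v hv
      simp only [Finset.mem_filter] at hv
      cases v with
      | inl p => simp at hv
      | inr z => exact ⟨z, by simp [hZ, hv.1], rfl⟩
  have hPtscard : Pts.card = (S.filter (fun v => ¬ (v.isRight = true))).card := by
    apply Finset.card_bij (fun p _ => Sum.inl p)
    · intro p hp
      simp only [hPts, Finset.mem_filter, Finset.mem_univ, true_and] at hp
      simp [hp]
    · intro a ha b hb hab; simpa using hab
    · intro v hv
      simp only [Finset.mem_filter] at hv
      cases v with
      | inl p => exact ⟨p, by simp [hPts, hv.1], rfl⟩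
      | inr z => simp at hv
  have hsplit : Pts.card + Z.card = S.card := by
    rw [hPtscard, hZcard, add_comm]
    exact Finset.card_filter_add_card_filter_not _
  have hOutPts : Out.card + Pts.card = Fintype.card P := by
    rw [hOut, hPts, add_comm, ← Finset.card_univ]
    exact Finset.card_filter_add_card_filter_not _
  have key : ∀ p ∈ Out, ∀ p' ∈ Out, p ≠ p' → tr p ≠ tr p' := by
    intro p hp p' hp' hne htre
    simp only [hOut, Finset.mem_filter, Finset.mem_univ, true_and] at hp hp'
    obtain ⟨s, hsS, hd⟩ := hS (Sum.inl p) (Sum.inl p') (by simp [hne])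
    cases s with
    | inl r =>
      have h1 : p ≠ r := fun e => hp (e ▸ hsS)
      have h2 : p' ≠ r := fun e => hp' (e ▸ hsS)
      rw [MobiusAux.dist_inl_inl M h1, MobiusAux.dist_inl_inl M h2] at hd
      exact hd rfl
    | inr z =>
      have hzZ : z ∈ Z := by simp [hZ, hsS]
      by_cases hpz : p ∈ z.1 <;> by_cases hp'z : p' ∈ z.1
      · rw [MobiusAux.dist_inl_inr_mem M hpz, MobiusAux.dist_inl_inr_mem M hp'z] at hd
        exact hd rfl
      · have hmem : z ∈ tr p := by simp [htr, hzZ, hpz]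
        rw [htre] at hmem
        simp [htr, hp'z] at hmem
      · have hmem : z ∈ tr p' := by simp [htr, hzZ, hp'z]
        rw [← htre] at hmem
        simp [htr, hpz] at hmem
      · rw [MobiusAux.dist_inl_inr_not_mem M hpz, MobiusAux.dist_inl_inr_not_mem M hp'z] at hd
        exact hd rfl
  -- upper bound for the incidence sum
  have hIub : ∑ p ∈ Out, (tr p).card ≤ Z.card * (q + 1) := by
    have hswap : ∑ p ∈ Out, (tr p).card
        = ∑ z ∈ Z, (Out.filter (fun p => p ∈ z.1)).card := by
      simp only [htr, Finset.card_filter]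
      exact Finset.sum_comm
    rw [hswap]
    have hterm : ∀ z ∈ Z, (Out.filter (fun p => p ∈ z.1)).card ≤ q + 1 := by
      intro z hz
      have hsub : Out.filter (fun p => p ∈ z.1) ⊆ z.1 :=
        fun x hx => (Finset.mem_filter.mp hx).2
      exact (Finset.card_le_card hsub).trans_eq (h z.1 z.2)
    calc ∑ z ∈ Z, (Out.filter (fun p => p ∈ z.1)).card
        ≤ ∑ _z ∈ Z, (q + 1) := Finset.sum_le_sum hterm
      _ = Z.card * (q + 1) := by rw [Finset.sum_const, smul_eq_mul]
  have hO0 : (Out.filter (fun p => (tr p).card = 0)).card ≤ 1 := by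
    rw [Finset.card_le_one]
    intro a ha b hb
    simp only [Finset.mem_filter] at ha hb
    by_contra hne
    apply key a ha.1 b hb.1 hne
    rw [Finset.card_eq_zero.mp ha.2, Finset.card_eq_zero.mp hb.2]
  have hO1 : (Out.filter (fun p => (tr p).card = 1)).card ≤ Z.card := by
    have hle : (Out.filter (fun p => (tr p).card = 1)).card
        ≤ (Z.image (fun z => ({z} : Finset {z // z ∈ M.circles}))).card := by
      apply Finset.card_le_card_of_injOn tr
      · intro p hp
        rw [Finset.mem_coe, Finset.mem_filter] at hp
        obtain ⟨a, haa⟩ := Finset.card_eq_one.mp hp.2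
        have haZ : a ∈ Z := by
          have hmem : a ∈ tr p := by rw [haa]; simp
          exact (Finset.mem_filter.mp hmem).1
        rw [haa]
        exact Finset.mem_image.mpr ⟨a, haZ, rfl⟩
      · intro a ha b hb hab
        by_contra hne
        exact key a (Finset.mem_filter.mp ha).1 b (Finset.mem_filter.mp hb).1 hne hab
    exact hle.trans Finset.card_image_le
  have hpt : ∀ p ∈ Out, 2 ≤ (tr p).card
      + ((if (tr p).card = 0 then 2 else 0) + (if (tr p).card = 1 then 1 else 0)) := by
    intro p _
    by_cases h0 : (tr p).card = 0 <;> by_cases h1 : (tr p).card = 1 <;>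
      simp [h0, h1] <;> omega
  have hsum2 : 2 * Out.card ≤ ∑ p ∈ Out, (tr p).card
      + (2 * (Out.filter (fun p => (tr p).card = 0)).card
        + (Out.filter (fun p => (tr p).card = 1)).card) := by
    have hsle := Finset.sum_le_sum hpt
    rw [Finset.sum_const, smul_eq_mul, Finset.sum_add_distrib, Finset.sum_add_distrib] at hsle
    have e0 : ∑ p ∈ Out, (if (tr p).card = 0 then 2 else 0)
        = 2 * (Out.filter (fun p => (tr p).card = 0)).card := by
      rw [← Finset.sum_filter, Finset.sum_const, smul_eq_mul, mul_comm]
    have e1 : ∑ p ∈ Out, (if (tr p).card = 1 then 1 else 0)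
        = (Out.filter (fun p => (tr p).card = 1)).card := by
      rw [← Finset.sum_filter, Finset.sum_const, smul_eq_mul, mul_one]
    rw [e0, e1] at hsle
    omega
  -- the master inequality over ℕ
  have hbound : 2 * q ^ 2 ≤ 2 * Pts.card + Z.card * (q + 2) := by
    have hZq : Z.card * (q + 2) = Z.card * (q + 1) + Z.card := by ring
    omega
  -- pass to ℚ
  have hq' : (2 : ℚ) ≤ (q : ℚ) := by exact_mod_cast hq2
  have hQpos : (0 : ℚ) < (q : ℚ) := by linarith
  have hb : 2 * (q : ℚ) ^ 2 ≤ 2 * (Pts.card : ℚ) + (Z.card : ℚ) * ((q : ℚ) + 2) := by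
    exact_mod_cast hbound
  have hsplitQ : (Pts.card : ℚ) + (Z.card : ℚ) = (S.card : ℚ) := by exact_mod_cast hsplit
  have hZleS : (Z.card : ℚ) ≤ (S.card : ℚ) := by
    have : Z.card ≤ S.card := hZcard ▸ Finset.card_filter_le _ _
    exact_mod_cast this
  have hmain : 2 * (q : ℚ) ^ 2 ≤ 2 * (S.card : ℚ) + (Z.card : ℚ) * (q : ℚ) := by nlinarith
  refine ⟨?_, ?_, ?_⟩
  · rw [← hZcard]
    rw [← mul_le_mul_iff_of_pos_right hQpos]
    have e : (2 * (q : ℚ) - 2 * (S.card : ℚ) / (q : ℚ)) * (q : ℚ)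
        = 2 * (q : ℚ) ^ 2 - 2 * (S.card : ℚ) := by
      field_simp
    rw [e]
    nlinarith
  · have hQ2pos : (0 : ℚ) < (q : ℚ) + 2 := by linarith
    rw [← mul_le_mul_iff_of_pos_right hQ2pos]
    have e : (2 * (q : ℚ) - 4 + 8 / ((q : ℚ) + 2)) * ((q : ℚ) + 2) = 2 * (q : ℚ) ^ 2 := by
      field_simp
      ring
    rw [e]
    nlinarith
  · have hNat : 2 * q ^ 2 ≤ S.card * (q + 2) := by
      have h1 : Z.card * q ≤ S.card * q :=
        Nat.mul_le_mul_right q (by exact_mod_cast (hZcard ▸ Finset.card_filter_le S _ : Z.card ≤ S.card))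
      have h2 : Z.card * (q + 2) = Z.card * q + 2 * Z.card := by ring
      have h3 : S.card * (q + 2) = S.card * q + 2 * S.card := by ring
      omega
    have hInt : 2 * (q : ℤ) ^ 2 ≤ (S.card : ℤ) * ((q : ℤ) + 2) := by exact_mod_cast hNat
    have hqI : (2 : ℤ) ≤ (q : ℤ) := by exact_mod_cast hq2
    by_contra hcon
    push_neg at hcon
    have hle : (S.card : ℤ) ≤ 2 * (q : ℤ) - 4 := by omega
    have hmul : (S.card : ℤ) * ((q : ℤ) + 2) ≤ (2 * (q : ℤ) - 4) * ((q : ℤ) + 2) :=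
      mul_le_mul_of_nonneg_right hle (by omega)
    nlinarith
end

section
/- Let S be a set of circles of a finite Möbius plane of order q that resolves the set of points (for any two distinct points X, Y there is s ∈ S incident with exactly one of them). Then |S| ≥ 2q - 4 + 8/(q+2); in particular, if 3 ≤ q ≤ 5 then |S| ≥ 2q-2, and if q > 5 then |S| ≥ 2q-3. -/
open Finset

theorem MobiusPlane.card_points_ge {P : Type*} [DecidableEq P] [Fintype P]
    (M : MobiusPlane P) (q : ℕ) (h : M.HasOrder q) : q ^ 2 + 1 ≤ Fintype.card P := by
  classical
  obtain ⟨⟨z, hz⟩, h3⟩ := M.ax3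
  have hzcard : z.card = q + 1 := h z hz
  have hq2 : 2 ≤ q := by have := h3 z hz; omega
  obtain ⟨A, hA⟩ : ∃ A, A ∈ z := Finset.card_pos.mp (by omega)
  obtain ⟨B, hB⟩ := M.ax4 z hz
  have hAB : A ≠ B := fun e => hB (e ▸ hA)
  set T := M.circles.filter (fun w => A ∈ w ∧ B ∈ w) with hT
  -- every point of z yields a circle through A and B
  have key : ∀ C : P, ∃ w, C ∈ z → (w ∈ T ∧ C ∈ w ∧ (C = A → z ∩ w = {A})) := by
    intro C
    by_cases hC : C ∈ z
    · by_cases hCA : C = A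
      · subst hCA
        obtain ⟨w, ⟨hw, hCw, hBw, hint⟩, _⟩ := M.ax2 z hz C hC B hB
        exact ⟨w, fun _ => ⟨mem_filter.mpr ⟨hw, hCw, hBw⟩, hCw, fun _ => hint⟩⟩
      · have hCB : C ≠ B := fun e => hB (e ▸ hC)
        obtain ⟨w, ⟨hw, hAw, hBw, hCw⟩, _⟩ :=
          M.ax1 A B C hAB (fun e => hCA e.symm) (fun e => hCB e.symm)
        exact ⟨w, fun _ => ⟨mem_filter.mpr ⟨hw, hAw, hBw⟩, hCw, fun e => absurd e hCA⟩⟩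
    · exact ⟨∅, fun h' => absurd h' hC⟩
  choose f hf using key
  have hTcard : q + 1 ≤ T.card := by
    rw [← hzcard]
    apply Finset.card_le_card_of_injOn f (fun C hC => ((hf C) hC).1)
    intro C hC C' hC' hfe
    simp only [Finset.mem_coe] at hC hC'
    obtain ⟨hwT, hCw, htan⟩ := hf C hC
    obtain ⟨hwT', hCw', htan'⟩ := hf C' hC'
    by_contra hne
    have hAw : A ∈ f C ∧ B ∈ f C := (mem_filter.mp hwT).2
    have hwc : f C ∈ M.circles := (mem_filter.mp hwT).1
    have hzc : f C ≠ z := fun e => hB (e ▸ hAw.2)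
    by_cases hCA : C = A
    · -- tangent case: C' ∈ z ∩ f C = {A}
      have hint := htan hCA
      have : C' ∈ z ∩ f C := Finset.mem_inter.mpr ⟨hC', hfe ▸ hCw'⟩
      rw [hint, Finset.mem_singleton] at this
      exact hne (hCA.trans this.symm)
    · by_cases hCA' : C' = A
      · have hint := htan' hCA'
        have : C ∈ z ∩ f C' := Finset.mem_inter.mpr ⟨hC, hfe ▸ hCw⟩
        rw [hint, Finset.mem_singleton] at this
        exact hne (this.trans hCA'.symm)
      · -- three distinct points A, C, C' on both z and f C
        obtain ⟨u, _, huniq⟩ := M.ax1 A C C' (fun e => hCA e.symm) (fun e => hCA' e.symm)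
          (fun e => hne e)
        have h1 : z = u := huniq z ⟨hz, hA, hC, hC'⟩
        have h2 : f C = u := huniq (f C) ⟨hwc, hAw.1, hCw, hfe ▸ hCw'⟩
        exact hzc (h2.trans h1.symm)
  -- the circles through A, B are pairwise disjoint outside {A, B}
  set U := T.biUnion (fun w => w \ {A, B}) with hU
  have hdisj : ∀ w1 ∈ T, ∀ w2 ∈ T, w1 ≠ w2 → Disjoint (w1 \ {A, B}) (w2 \ {A, B}) := by
    intro w1 h1 w2 h2 hne
    rw [Finset.disjoint_left]
    intro x hx1 hx2
    obtain ⟨hxw1, hxAB⟩ := Finset.mem_sdiff.mp hx1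
    obtain ⟨hxw2, _⟩ := Finset.mem_sdiff.mp hx2
    simp only [Finset.mem_insert, Finset.mem_singleton, not_or] at hxAB
    obtain ⟨h1c, hA1, hB1⟩ := mem_filter.mp h1
    obtain ⟨h2c, hA2, hB2⟩ := mem_filter.mp h2
    obtain ⟨u, _, huniq⟩ := M.ax1 A B x hAB (fun e => hxAB.1 e.symm) (fun e => hxAB.2 e.symm)
    exact hne ((huniq w1 ⟨h1c, hA1, hB1, hxw1⟩).trans (huniq w2 ⟨h2c, hA2, hB2, hxw2⟩).symm)
  have hUcard : U.card = ∑ w ∈ T, (w \ {A, B}).card := Finset.card_biUnion hdisj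
  have hpart : ∀ w ∈ T, (w \ ({A, B} : Finset P)).card = q - 1 := by
    intro w hw
    obtain ⟨hwc, hAw, hBw⟩ := mem_filter.mp hw
    have hsub : ({A, B} : Finset P) ⊆ w := by
      intro x hx
      simp only [Finset.mem_insert, Finset.mem_singleton] at hx
      rcases hx with rfl | rfl <;> assumption
    rw [Finset.card_sdiff_of_subset hsub, h w hwc, Finset.card_insert_of_notMem (by simpa using hAB),
      Finset.card_singleton]
    omega
  have hUcard' : U.card = T.card * (q - 1) := by
    rw [hUcard, Finset.sum_congr rfl hpart, Finset.sum_const, smul_eq_mul]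
  have hAU : A ∉ U := by
    simp only [hU, Finset.mem_biUnion, not_exists]
    rintro w ⟨_, hmem⟩
    exact (Finset.mem_sdiff.mp hmem).2 (by simp)
  have hBU : B ∉ U := by
    simp only [hU, Finset.mem_biUnion, not_exists]
    rintro w ⟨_, hmem⟩
    exact (Finset.mem_sdiff.mp hmem).2 (by simp)
  have hcard : U.card + 2 ≤ Fintype.card P := by
    have : (insert A (insert B U)).card ≤ Fintype.card P := Finset.card_le_univ _
    rwa [Finset.card_insert_of_notMem (by simp [hAU, hAB]),
      Finset.card_insert_of_notMem hBU] at this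
  obtain ⟨k, rfl⟩ : ∃ k, q = k + 2 := ⟨q - 2, by omega⟩
  have hsimp : k + 2 - 1 = k + 1 := rfl
  rw [hsimp] at hUcard'
  have hmul : (k + 3) * (k + 1) ≤ T.card * (k + 1) :=
    Nat.mul_le_mul_right _ (by omega : k + 3 ≤ T.card)
  have heq : (k + 3) * (k + 1) + 2 = (k + 2) ^ 2 + 1 := by ring
  linarith

/-- If a set `S` of circles resolves the point set of a Möbius plane of order `q`,
then `|S| ≥ 2q - 4 + 8/(q+2)`; in particular `|S| ≥ 2q - 2` for `3 ≤ q ≤ 5` and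
`|S| ≥ 2q - 3` for `q > 5`. -/
theorem circle_split_resolving_lower_bound {P : Type*} [DecidableEq P] [Fintype P]
    (M : MobiusPlane P) (q : ℕ) (h : M.HasOrder q)
    (S : Finset (Finset P)) (hSsub : S ⊆ M.circles)
    (hres : ∀ X Y : P, X ≠ Y → ∃ z ∈ S, (X ∈ z ∧ Y ∉ z) ∨ (X ∉ z ∧ Y ∈ z)) :
    (2 * (q : ℚ) - 4 + 8 / ((q : ℚ) + 2) ≤ (S.card : ℚ)) ∧
    (3 ≤ q → q ≤ 5 → 2 * (q : ℤ) - 2 ≤ (S.card : ℤ)) ∧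
    (5 < q → 2 * (q : ℤ) - 3 ≤ (S.card : ℤ)) := by
  classical
  have hN := M.card_points_ge q h
  set n := S.card with hn
  set sig : P → Finset (Finset P) := fun x => S.filter (fun s => x ∈ s) with hsigdef
  set d : P → ℕ := fun x => (sig x).card with hd
  -- signatures are injective
  have hsig : ∀ x y : P, x ≠ y → sig x ≠ sig y := by
    intro x y hxy heq
    obtain ⟨s0, hs0S, hcase⟩ := hres x y hxy
    rcases hcase with ⟨h1, h2⟩ | ⟨h1, h2⟩
    · have hx : s0 ∈ sig x := mem_filter.mpr ⟨hs0S, h1⟩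
      rw [heq] at hx
      exact h2 (mem_filter.mp hx).2
    · have hy : s0 ∈ sig y := mem_filter.mpr ⟨hs0S, h2⟩
      rw [← heq] at hy
      exact h1 (mem_filter.mp hy).2
  -- total incidence count
  have hsum : ∑ x : P, d x = n * (q + 1) := by
    calc ∑ x : P, d x = ∑ x : P, ∑ s ∈ S, if x ∈ s then 1 else 0 := by
          simp only [hd, hsigdef, Finset.card_filter]
      _ = ∑ s ∈ S, ∑ x : P, if x ∈ s then 1 else 0 := Finset.sum_comm
      _ = ∑ s ∈ S, s.card := by
          refine Finset.sum_congr rfl fun s _ => ?_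
          rw [Finset.sum_ite_mem, Finset.univ_inter, Finset.sum_const, smul_eq_mul, mul_one]
      _ = ∑ s ∈ S, (q + 1) := Finset.sum_congr rfl fun s hs => h s (hSsub hs)
      _ = n * (q + 1) := by rw [Finset.sum_const, smul_eq_mul]
  set A0 := Finset.univ.filter (fun x : P => d x = 0) with hA0
  set A1 := Finset.univ.filter (fun x : P => d x = 1) with hA1
  have hA0card : A0.card ≤ 1 := by
    by_contra hc
    obtain ⟨x, hx, y, hy, hxy⟩ := Finset.one_lt_card.mp (show 1 < A0.card by omega)
    have hx0 : sig x = ∅ := Finset.card_eq_zero.mp (mem_filter.mp hx).2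
    have hy0 : sig y = ∅ := Finset.card_eq_zero.mp (mem_filter.mp hy).2
    exact hsig x y hxy (hx0.trans hy0.symm)
  have hA1card : A1.card ≤ n := by
    have hmap : ∀ x ∈ A1, sig x ∈ S.image fun s => ({s} : Finset (Finset P)) := by
      intro x hx
      obtain ⟨s, hs⟩ := Finset.card_eq_one.mp (mem_filter.mp hx).2
      have hsx : s ∈ sig x := by rw [hs]; exact Finset.mem_singleton_self s
      have hsS : s ∈ S := (mem_filter.mp hsx).1
      exact Finset.mem_image.mpr ⟨s, hsS, hs.symm⟩
    have hinj : Set.InjOn sig A1 := fun x _ y _ hxy => by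
      by_contra hne
      exact hsig x y hne hxy
    calc A1.card ≤ (S.image fun s => ({s} : Finset (Finset P))).card :=
        Finset.card_le_card_of_injOn sig hmap hinj
      _ ≤ n := Finset.card_image_le
  -- pointwise lower bound
  have hpt : ∀ x : P, 2 ≤ d x + (if d x = 1 then 1 else 0) + (if d x = 0 then 2 else 0) := by
    intro x
    split_ifs <;> omega
  have hsum2 : 2 * Fintype.card P ≤ n * (q + 1) + A1.card + 2 * A0.card := by
    have h1 : ∑ _x : P, 2 ≤
        ∑ x : P, (d x + (if d x = 1 then 1 else 0) + (if d x = 0 then 2 else 0)) :=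
      Finset.sum_le_sum fun x _ => hpt x
    rw [Finset.sum_const, smul_eq_mul, mul_comm] at h1
    have h2 : ∑ x : P, (d x + (if d x = 1 then 1 else 0) + (if d x = 0 then 2 else 0)) =
        (∑ x : P, d x) + A1.card + 2 * A0.card := by
      rw [Finset.sum_add_distrib, Finset.sum_add_distrib]
      congr 1
      · congr 1
        rw [hA1, Finset.card_filter]
      · rw [hA0, Finset.card_filter, Finset.mul_sum]
        exact Finset.sum_congr rfl fun x _ => by split_ifs <;> omega
    rw [h2, hsum] at h1
    exact h1
  have hkey : 2 * q ^ 2 ≤ n * (q + 2) := by nlinarith [hN, hA0card, hA1card, hsum2]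
  refine ⟨?_, ?_, ?_⟩
  · have hq2 : (0 : ℚ) < (q : ℚ) + 2 := by positivity
    rw [show 2 * (q : ℚ) - 4 + 8 / ((q : ℚ) + 2) = (2 * (q : ℚ) ^ 2) / ((q : ℚ) + 2) by
      field_simp; ring, div_le_iff₀ hq2]
    exact_mod_cast hkey
  · intro h3 h5
    interval_cases q <;> omega
  · intro h5
    have hkeyZ : 2 * (q : ℤ) ^ 2 ≤ (n : ℤ) * ((q : ℤ) + 2) := by exact_mod_cast hkey
    nlinarith [hkeyZ, (by exact_mod_cast h5 : (5 : ℤ) < (q : ℤ))]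
end

section
/- Let S be a set of points of a finite Möbius plane of order q ≥ 3 that resolves the set of circles (for any two distinct circles a, b there is a point of S on exactly one of them). Then |S| ≥ 3q - 7. -/
open Finset

section Aux
variable {P : Type*} [DecidableEq P]

/-- Two circles sharing three distinct points are equal. -/
lemma mob_eq_of_three (M : MobiusPlane P) {z z' : Finset P} (hz : z ∈ M.circles)
    (hz' : z' ∈ M.circles) {a b c : P} (hab : a ≠ b) (hac : a ≠ c) (hbc : b ≠ c)
    (ha : a ∈ z) (hb : b ∈ z) (hc : c ∈ z) (ha' : a ∈ z') (hb' : b ∈ z') (hc' : c ∈ z') :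
    z = z' := by
  obtain ⟨w, -, hu⟩ := M.ax1 a b c hab hac hbc
  rw [hu z ⟨hz, ha, hb, hc⟩, hu z' ⟨hz', ha', hb', hc'⟩]

lemma nat_sq_sub (m : ℕ) : m * m - m = m * (m - 1) := by
  cases m with
  | zero => simp
  | succ k => have : (k+1) * (k+1) = (k+1) * k + (k+1) := by ring
              simp [this]

/-- The point count is at least q^2 + 1. -/
lemma mob_point_count [Fintype P] (M : MobiusPlane P) (q : ℕ) (hq : 3 ≤ q)
    (h : M.HasOrder q) : q * q + 1 ≤ Fintype.card P := by
  classical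
  obtain ⟨⟨z0, hz0⟩, -⟩ := M.ax3
  have hz0card : z0.card = q + 1 := h z0 hz0
  have hz0ne : z0.Nonempty := card_pos.mp (by omega)
  obtain ⟨A, hA⟩ := hz0ne
  obtain ⟨x, hx⟩ := M.ax4 z0 hz0
  have hAx : A ≠ x := fun hh => hx (hh ▸ hA)
  -- secant circles through A, x, u for u ∈ z0.erase A
  have hg : ∀ u ∈ z0.erase A, ∃ c, c ∈ M.circles ∧ A ∈ c ∧ x ∈ c ∧ u ∈ c := by
    intro u hu
    obtain ⟨huA, huz0⟩ := mem_erase.mp hu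
    have hux : x ≠ u := fun hh => hx (hh ▸ huz0)
    obtain ⟨c, hc, -⟩ := M.ax1 A x u hAx (Ne.symm huA) hux
    exact ⟨c, hc.1, hc.2.1, hc.2.2.1, hc.2.2.2⟩
  choose! g hg1 hg2 hg3 hg4 using hg
  -- tangent circle
  obtain ⟨cT, ⟨hcT, hAcT, hxcT, htang⟩, -⟩ := M.ax2 z0 hz0 A hA x hx
  set F : Finset (Finset P) := insert cT ((z0.erase A).image g) with hF
  have hginj : Set.InjOn g ↑(z0.erase A) := by
    intro u hu v hv huv
    by_contra hne
    obtain ⟨huA, huz0⟩ := mem_erase.mp (by exact_mod_cast hu)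
    obtain ⟨hvA, hvz0⟩ := mem_erase.mp (by exact_mod_cast hv)
    have hu' := mem_coe.mp hu
    have hv' := mem_coe.mp hv
    have : g u = z0 := mob_eq_of_three M (hg1 u hu') hz0 (Ne.symm huA) (Ne.symm hvA) hne
      (hg2 u hu') (hg4 u hu') (huv ▸ hg4 v hv') hA huz0 hvz0
    exact hx (this ▸ hg3 u hu')
  have hcTnot : cT ∉ (z0.erase A).image g := by
    intro hmem
    obtain ⟨u, hu, hgu⟩ := mem_image.mp hmem
    obtain ⟨huA, huz0⟩ := mem_erase.mp hu
    have : u ∈ z0 ∩ cT := mem_inter.mpr ⟨huz0, hgu ▸ hg4 u hu⟩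
    rw [htang, mem_singleton] at this
    exact huA this
  have hFcard : F.card = q + 1 := by
    rw [hF, card_insert_of_notMem hcTnot, card_image_of_injOn hginj, card_erase_of_mem hA,
      hz0card]
    omega
  have hFmem : ∀ c ∈ F, c ∈ M.circles ∧ A ∈ c ∧ x ∈ c := by
    intro c hc
    rcases mem_insert.mp hc with rfl | hc
    · exact ⟨hcT, hAcT, hxcT⟩
    · obtain ⟨u, hu, rfl⟩ := mem_image.mp hc
      exact ⟨hg1 u hu, hg2 u hu, hg3 u hu⟩
  -- pairwise disjoint pieces
  have hdisj : ∀ c ∈ F, ∀ c' ∈ F, c ≠ c' →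
      Disjoint ((c.erase A).erase x) ((c'.erase A).erase x) := by
    intro c hc c' hc' hne
    rw [disjoint_left]
    intro y hy hy'
    obtain ⟨hyx, hyA, hyc⟩ : y ≠ x ∧ y ≠ A ∧ y ∈ c := by
      obtain ⟨h1, h2⟩ := mem_erase.mp hy
      obtain ⟨h3, h4⟩ := mem_erase.mp h2
      exact ⟨h1, h3, h4⟩
    obtain ⟨-, h2'⟩ := mem_erase.mp hy'
    obtain ⟨-, hyc'⟩ := mem_erase.mp h2'
    obtain ⟨hc1, hc2, hc3⟩ := hFmem c hc
    obtain ⟨hc1', hc2', hc3'⟩ := hFmem c' hc'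
    exact hne (mob_eq_of_three M hc1 hc1' hAx (Ne.symm hyA) (Ne.symm hyx)
      hc2 hc3 hyc hc2' hc3' hyc')
  have hpiece : ∀ c ∈ F, ((c.erase A).erase x).card = q - 1 := by
    intro c hc
    obtain ⟨hc1, hc2, hc3⟩ := hFmem c hc
    have hccard : c.card = q + 1 := h c hc1
    rw [card_erase_of_mem (mem_erase.mpr ⟨Ne.symm hAx, hc3⟩), card_erase_of_mem hc2, hccard]
    omega
  have hbU : (F.biUnion (fun c => (c.erase A).erase x)).card = (q + 1) * (q - 1) := by
    rw [card_biUnion hdisj]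
    rw [Finset.sum_congr rfl hpiece, sum_const, hFcard, smul_eq_mul]
  have hAnot : A ∉ F.biUnion (fun c => (c.erase A).erase x) := by
    intro hmem
    obtain ⟨c, -, hmem⟩ := mem_biUnion.mp hmem
    exact (mem_erase.mp (mem_erase.mp hmem).2).1 rfl
  have hxnot : x ∉ F.biUnion (fun c => (c.erase A).erase x) := by
    intro hmem
    obtain ⟨c, -, hmem⟩ := mem_biUnion.mp hmem
    exact (mem_erase.mp hmem).1 rfl
  have hsub : insert A (insert x (F.biUnion (fun c => (c.erase A).erase x))) ⊆ univ :=
    subset_univ _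
  have hAnot2 : A ∉ insert x (F.biUnion (fun c => (c.erase A).erase x)) := by
    simp only [mem_insert]
    push_neg
    exact ⟨hAx, hAnot⟩
  have hcard2 : (insert A (insert x (F.biUnion (fun c => (c.erase A).erase x)))).card
      = (q + 1) * (q - 1) + 2 := by
    rw [card_insert_of_notMem hAnot2, card_insert_of_notMem hxnot, hbU]
  have := card_le_card hsub
  rw [hcard2, card_univ] at this
  have hqq : (q + 1) * (q - 1) + 2 = q * q + 1 := by
    obtain ⟨m, rfl⟩ : ∃ m, q = m + 3 := ⟨q - 3, by omega⟩
    show (m + 3 + 1) * (m + 2) + 2 = (m + 3) * (m + 3) + 1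
    ring
  omega

end Aux

set_option maxHeartbeats 4000000 in
/-- If a set `S` of points resolves the circle set of a Möbius plane of order
`q ≥ 3`, then `|S| ≥ 3q - 7`. -/
theorem point_split_resolving_lower_bound {P : Type*} [DecidableEq P] [Fintype P]
    (M : MobiusPlane P) (q : ℕ) (hq : 3 ≤ q) (h : M.HasOrder q)
    (S : Finset P)
    (hres : ∀ a ∈ M.circles, ∀ b ∈ M.circles, a ≠ b →
      ∃ p ∈ S, (p ∈ a ∧ p ∉ b) ∨ (p ∉ a ∧ p ∈ b)) :
    3 * (q : ℤ) - 7 ≤ (S.card : ℤ) := by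
  classical
  set n := Fintype.card P with hn_def
  have hn : q * q + 1 ≤ n := mob_point_count M q hq h
  -- injectivity of intersection with S
  have hinj : ∀ z ∈ M.circles, ∀ z' ∈ M.circles, z ∩ S = z' ∩ S → z = z' := by
    intro z hz z' hz' hzz'
    by_contra hne
    obtain ⟨p, hpS, hp⟩ := hres z hz z' hz' hne
    rcases hp with ⟨h1, h2⟩ | ⟨h1, h2⟩
    · have : p ∈ z ∩ S := mem_inter.mpr ⟨h1, hpS⟩
      rw [hzz'] at this
      exact h2 (mem_inter.mp this).1
    · have : p ∈ z' ∩ S := mem_inter.mpr ⟨h2, hpS⟩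
      rw [← hzz'] at this
      exact h1 (mem_inter.mp this).1
  -- degree count
  have hdeg : ∀ A : P, (M.circles.filter (fun z => A ∈ z)).card * (q * (q - 1))
      = (n - 1) * (n - 2) := by
    intro A
    have key : (univ.erase A).offDiag = (M.circles.filter (fun z => A ∈ z)).biUnion
        (fun z => (z.erase A).offDiag) := by
      ext ⟨b, c⟩
      simp only [mem_offDiag, mem_biUnion, mem_filter, mem_erase, mem_univ, and_true]
      constructor
      · rintro ⟨hbA, hcA, hbc⟩
        obtain ⟨z, ⟨hz, hAz, hbz, hcz⟩, -⟩ := M.ax1 A b c (Ne.symm hbA) (Ne.symm hcA) hbc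
        exact ⟨z, ⟨hz, hAz⟩, ⟨hbA, hbz⟩, ⟨hcA, hcz⟩, hbc⟩
      · rintro ⟨z, ⟨hz, hAz⟩, ⟨hbA, hbz⟩, ⟨hcA, hcz⟩, hbc⟩
        exact ⟨hbA, hcA, hbc⟩
    have hdisj : ∀ z ∈ M.circles.filter (fun z => A ∈ z),
        ∀ z' ∈ M.circles.filter (fun z => A ∈ z), z ≠ z' →
        Disjoint ((z.erase A).offDiag) ((z'.erase A).offDiag) := by
      intro z hz z' hz' hne
      obtain ⟨hz1, hz2⟩ := mem_filter.mp hz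
      obtain ⟨hz1', hz2'⟩ := mem_filter.mp hz'
      rw [disjoint_left]
      rintro ⟨b, c⟩ hbc hbc'
      obtain ⟨hb, hc, hbcne⟩ := mem_offDiag.mp hbc
      obtain ⟨hb', hc', -⟩ := mem_offDiag.mp hbc'
      exact hne (mob_eq_of_three M hz1 hz1' (Ne.symm (mem_erase.mp hb).1)
        (Ne.symm (mem_erase.mp hc).1) hbcne hz2 (mem_erase.mp hb).2 (mem_erase.mp hc).2
        hz2' (mem_erase.mp hb').2 (mem_erase.mp hc').2)
    have hcards := congrArg Finset.card key
    rw [card_biUnion hdisj, offDiag_card, card_erase_of_mem (mem_univ A), card_univ] at hcards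
    have hsum : ∀ z ∈ M.circles.filter (fun z => A ∈ z),
        ((z.erase A).offDiag).card = q * (q - 1) := by
      intro z hz
      obtain ⟨hz1, hz2⟩ := mem_filter.mp hz
      rw [offDiag_card, card_erase_of_mem hz2, h z hz1]
      simp only [Nat.add_sub_cancel]
      exact nat_sq_sub q
    rw [Finset.sum_congr rfl hsum, sum_const, smul_eq_mul] at hcards
    have e : n - 1 - 1 = n - 2 := by omega
    rw [← hcards, nat_sq_sub (n - 1), e]
  -- incidence double counting: T = ∑ p in S, deg p
  have hswap : ∀ (X : Finset P), ∑ z ∈ M.circles, (z ∩ X).card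
      = ∑ p ∈ X, (M.circles.filter (fun z => p ∈ z)).card := by
    intro X
    have h1 : ∀ z : Finset P, (z ∩ X).card = ∑ p ∈ X, if p ∈ z then 1 else 0 := by
      intro z
      rw [← card_filter]
      congr 1
      ext p
      simp [mem_inter, and_comm]
    have h2 : ∀ p : P, (M.circles.filter (fun z => p ∈ z)).card
        = ∑ z ∈ M.circles, if p ∈ z then 1 else 0 := fun p => card_filter _ _
    simp only [h1, h2]
    exact Finset.sum_comm
  -- total incidences over all points
  have hNn : M.circles.card * (q + 1) * (q * (q - 1)) = n * ((n - 1) * (n - 2)) := by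
    have e1 : ∑ z ∈ M.circles, (z ∩ univ).card = ∑ p ∈ univ, (M.circles.filter (fun z => p ∈ z)).card :=
      hswap univ
    have e2 : ∀ z ∈ M.circles, (z ∩ univ).card = q + 1 := by
      intro z hz; rw [inter_univ]; exact h z hz
    rw [Finset.sum_congr rfl e2, sum_const, smul_eq_mul] at e1
    have e3 : ∑ p ∈ univ, (M.circles.filter (fun z => p ∈ z)).card * (q * (q-1))
        = ∑ p ∈ (univ : Finset P), (n-1) * (n-2) := by
      exact Finset.sum_congr rfl (fun p _ => hdeg p)
    rw [← Finset.sum_mul, ← e1, sum_const, smul_eq_mul, card_univ] at e3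
    rw [e3]
  -- T * q(q-1) = s * (n-1)(n-2)
  have hT : (∑ z ∈ M.circles, (z ∩ S).card) * (q * (q - 1)) = S.card * ((n - 1) * (n - 2)) := by
    rw [hswap S, Finset.sum_mul]
    calc (∑ p ∈ S, (M.circles.filter (fun z => p ∈ z)).card * (q * (q-1)))
        = ∑ p ∈ S, (n-1) * (n-2) := Finset.sum_congr rfl (fun p _ => hdeg p)
      _ = S.card * ((n-1)*(n-2)) := by rw [sum_const, smul_eq_mul]
  -- cumulative small-intersection bounds
  have hm : ∀ k : ℕ, (M.circles.filter (fun z => (z ∩ S).card ≤ k)).card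
      ≤ (S.powerset.filter (fun t => t.card ≤ k)).card := by
    intro k
    apply card_le_card_of_injOn (fun z => z ∩ S)
    · intro z hz
      obtain ⟨hz1, hz2⟩ := mem_filter.mp hz
      exact mem_filter.mpr ⟨mem_powerset.mpr inter_subset_right, hz2⟩
    · intro z hz z' hz' hzz'
      exact hinj z (mem_filter.mp (mem_coe.mp hz)).1 z' (mem_filter.mp (mem_coe.mp hz')).1 hzz'
  have hpow : ∀ k : ℕ, (S.powerset.filter (fun t => t.card = k)).card = S.card.choose k := by
    intro k
    rw [← powersetCard_eq_filter, card_powersetCard]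
  have hm0 : (M.circles.filter (fun z => (z ∩ S).card ≤ 0)).card ≤ 1 := by
    refine le_trans (hm 0) ?_
    have : S.powerset.filter (fun t => t.card ≤ 0) = S.powerset.filter (fun t => t.card = 0) := by
      apply filter_congr; intro t _; omega
    rw [this, hpow 0, Nat.choose_zero_right]
  have hm1 : (M.circles.filter (fun z => (z ∩ S).card ≤ 1)).card ≤ 1 + S.card := by
    refine le_trans (hm 1) ?_
    have hsub : S.powerset.filter (fun t => t.card ≤ 1)
        ⊆ S.powerset.filter (fun t => t.card = 0) ∪ S.powerset.filter (fun t => t.card = 1) := by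
      intro t ht
      obtain ⟨ht1, ht2⟩ := mem_filter.mp ht
      rw [mem_union, mem_filter, mem_filter]
      have : t.card = 0 ∨ t.card = 1 := by omega
      tauto
    calc (S.powerset.filter (fun t => t.card ≤ 1)).card
        ≤ (S.powerset.filter (fun t => t.card = 0) ∪ S.powerset.filter (fun t => t.card = 1)).card :=
          card_le_card hsub
      _ ≤ (S.powerset.filter (fun t => t.card = 0)).card + (S.powerset.filter (fun t => t.card = 1)).card :=
          card_union_le _ _
      _ = 1 + S.card := by rw [hpow 0, hpow 1, Nat.choose_zero_right, Nat.choose_one_right]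
  have hm2 : (M.circles.filter (fun z => (z ∩ S).card ≤ 2)).card ≤ 1 + S.card + S.card.choose 2 := by
    refine le_trans (hm 2) ?_
    have hsub : S.powerset.filter (fun t => t.card ≤ 2)
        ⊆ (S.powerset.filter (fun t => t.card = 0) ∪ S.powerset.filter (fun t => t.card = 1))
          ∪ S.powerset.filter (fun t => t.card = 2) := by
      intro t ht
      obtain ⟨ht1, ht2⟩ := mem_filter.mp ht
      rw [mem_union, mem_union, mem_filter, mem_filter, mem_filter]
      have : t.card = 0 ∨ t.card = 1 ∨ t.card = 2 := by omega
      tauto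
    calc (S.powerset.filter (fun t => t.card ≤ 2)).card
        ≤ ((S.powerset.filter (fun t => t.card = 0) ∪ S.powerset.filter (fun t => t.card = 1))
          ∪ S.powerset.filter (fun t => t.card = 2)).card := card_le_card hsub
      _ ≤ (S.powerset.filter (fun t => t.card = 0) ∪ S.powerset.filter (fun t => t.card = 1)).card
          + (S.powerset.filter (fun t => t.card = 2)).card := card_union_le _ _
      _ ≤ ((S.powerset.filter (fun t => t.card = 0)).card
          + (S.powerset.filter (fun t => t.card = 1)).card)
          + (S.powerset.filter (fun t => t.card = 2)).card :=
          Nat.add_le_add_right (card_union_le _ _) _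
      _ = 1 + S.card + S.card.choose 2 := by
          rw [hpow 0, hpow 1, hpow 2, Nat.choose_zero_right, Nat.choose_one_right]
  have hch : 2 * S.card.choose 2 ≤ S.card * S.card := by
    rw [Nat.choose_two_right]
    calc 2 * (S.card * (S.card - 1) / 2) ≤ S.card * (S.card - 1) := by
          rw [mul_comm]; exact Nat.div_mul_le_self _ 2
      _ ≤ S.card * S.card := Nat.mul_le_mul_left _ (by omega)
  -- the truncated sum bound
  have hsum3 : 3 * M.circles.card ≤ (∑ z ∈ M.circles, (z ∩ S).card)
      + ((M.circles.filter (fun z => (z ∩ S).card ≤ 0)).card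
        + (M.circles.filter (fun z => (z ∩ S).card ≤ 1)).card
        + (M.circles.filter (fun z => (z ∩ S).card ≤ 2)).card) := by
    have key : ∀ z : Finset P, 3 ≤ (z ∩ S).card
        + ((if (z ∩ S).card ≤ 0 then 1 else 0) + (if (z ∩ S).card ≤ 1 then 1 else 0)
          + (if (z ∩ S).card ≤ 2 then 1 else 0)) := by
      intro z
      split_ifs <;> omega
    calc 3 * M.circles.card = ∑ _z ∈ M.circles, 3 := by rw [sum_const, smul_eq_mul, mul_comm]
      _ ≤ ∑ z ∈ M.circles, ((z ∩ S).card
          + ((if (z ∩ S).card ≤ 0 then 1 else 0) + (if (z ∩ S).card ≤ 1 then 1 else 0)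
            + (if (z ∩ S).card ≤ 2 then 1 else 0))) := Finset.sum_le_sum (fun z _ => key z)
      _ = (∑ z ∈ M.circles, (z ∩ S).card)
          + ((M.circles.filter (fun z => (z ∩ S).card ≤ 0)).card
            + (M.circles.filter (fun z => (z ∩ S).card ≤ 1)).card
            + (M.circles.filter (fun z => (z ∩ S).card ≤ 2)).card) := by
          rw [Finset.sum_add_distrib, Finset.sum_add_distrib, Finset.sum_add_distrib,
            ← card_filter, ← card_filter, ← card_filter]
  -- move to the integers
  set s := S.card with hs_def
  set N := M.circles.card with hN_def
  set T := ∑ z ∈ M.circles, (z ∩ S).card with hT_def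
  set m0 := (M.circles.filter (fun z => (z ∩ S).card ≤ 0)).card with hm0_def
  set m1 := (M.circles.filter (fun z => (z ∩ S).card ≤ 1)).card with hm1_def
  set m2 := (M.circles.filter (fun z => (z ∩ S).card ≤ 2)).card with hm2_def
  clear_value n s N T m0 m1 m2
  clear hm hpow hswap hdeg hinj hres h hT_def hN_def hm0_def hm1_def hm2_def hs_def hn_def M S
  have hq1 : 1 ≤ q := by omega
  have hn1 : 1 ≤ n := by nlinarith
  have hn2 : 2 ≤ n := by nlinarith
  zify [hq1, hn1, hn2] at hT hNn
  zify at hsum3 hm0 hm1 hm2 hch hn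
  by_contra hcon
  push_neg at hcon
  have hsZ : (s : ℤ) ≤ 3 * q - 8 := by omega
  have hs0 : (0 : ℤ) ≤ (s : ℤ) := Int.natCast_nonneg s
  have hq3 : (3 : ℤ) ≤ (q : ℤ) := by exact_mod_cast hq
  have hnZ : (q : ℤ) * q + 1 ≤ (n : ℤ) := by exact_mod_cast hn
  set K : ℤ := ((n : ℤ) - 1) * ((n : ℤ) - 2) with hK_def
  set Q2 : ℤ := (q : ℤ) * ((q : ℤ) - 1) with hQ2_def
  clear_value K Q2
  have hQ2pos : 0 < Q2 := by rw [hQ2_def]; nlinarith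
  have hKpos : 0 < K := by rw [hK_def]; nlinarith
  have hMnn : (0 : ℤ) ≤ (m0 : ℤ) + m1 + m2 := by positivity
  have hM : 2 * ((m0 : ℤ) + m1 + m2) ≤ (s : ℤ) * s + 4 * s + 6 := by
    have := hch
    omega
  have c1 : 2 * K * (3 * (n : ℤ) - (s : ℤ) * ((q : ℤ) + 1))
      = (3 * (N : ℤ) - (T : ℤ)) * (2 * ((q : ℤ) + 1) * Q2) := by
    linear_combination (-6 : ℤ) * hNn + 2 * ((q : ℤ) + 1) * hT
  have hfac : (0 : ℤ) ≤ 2 * ((q : ℤ) + 1) * Q2 := by positivity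
  have c2 : (3 * (N : ℤ) - (T : ℤ)) * (2 * ((q : ℤ) + 1) * Q2)
      ≤ ((m0 : ℤ) + m1 + m2) * (2 * ((q : ℤ) + 1) * Q2) :=
    mul_le_mul_of_nonneg_right (by linarith [hsum3]) hfac
  have c3 : ((m0 : ℤ) + m1 + m2) * (2 * ((q : ℤ) + 1) * Q2)
      ≤ ((s : ℤ) * s + 4 * s + 6) * (((q : ℤ) + 1) * Q2) := by
    have h4' := mul_le_mul_of_nonneg_right hM (by positivity : (0:ℤ) ≤ ((q : ℤ) + 1) * Q2)
    nlinarith [h4']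
  have step1 : 2 * K * (3 * (n : ℤ) - (s : ℤ) * ((q : ℤ) + 1))
      ≤ ((s : ℤ) * s + 4 * s + 6) * (((q : ℤ) + 1) * Q2) := by
    rw [c1]; linarith
  have ha : 5 * (q : ℤ) + 11 ≤ 3 * (n : ℤ) - (s : ℤ) * ((q : ℤ) + 1) := by
    have := mul_le_mul_of_nonneg_right hsZ (by linarith : (0:ℤ) ≤ (q : ℤ) + 1)
    nlinarith
  have hb : (q : ℤ) * q * ((q : ℤ) * q - 1) ≤ K := by
    rw [hK_def]
    nlinarith [mul_le_mul (by linarith : (q : ℤ) * q ≤ (n : ℤ) - 1)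
      (by linarith : (q : ℤ) * q - 1 ≤ (n : ℤ) - 2)
      (by nlinarith : (0 : ℤ) ≤ (q : ℤ) * q - 1) (by nlinarith : (0 : ℤ) ≤ (n : ℤ) - 1)]
  have step2 : 2 * ((q : ℤ) * q * ((q : ℤ) * q - 1)) * (5 * (q : ℤ) + 11)
      ≤ 2 * K * (3 * (n : ℤ) - (s : ℤ) * ((q : ℤ) + 1)) := by
    have := mul_le_mul (by linarith : 2 * ((q : ℤ) * q * ((q : ℤ) * q - 1)) ≤ 2 * K) ha
      (by linarith : (0 : ℤ) ≤ 5 * (q : ℤ) + 11) (by linarith : (0 : ℤ) ≤ 2 * K)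
    linarith
  have step3 : ((s : ℤ) * s + 4 * s + 6) * (((q : ℤ) + 1) * Q2)
      ≤ (9 * (q : ℤ) * q - 36 * q + 38) * (((q : ℤ) + 1) * Q2) := by
    have hss : (s : ℤ) * s + 4 * s + 6 ≤ 9 * (q : ℤ) * q - 36 * q + 38 := by
      nlinarith [mul_le_mul hsZ hsZ hs0 (by linarith : (0:ℤ) ≤ 3 * (q:ℤ) - 8)]
    exact mul_le_mul_of_nonneg_right hss (by positivity)
  have final : (9 * (q : ℤ) * q - 36 * q + 38) * (((q : ℤ) + 1) * Q2)
      < 2 * ((q : ℤ) * q * ((q : ℤ) * q - 1)) * (5 * (q : ℤ) + 11) := by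
    have f1 : (0 : ℤ) < (q : ℤ) * ((q : ℤ) * q - 1) := by nlinarith
    have f2 : (0 : ℤ) < (q : ℤ) * q + 58 * q - 38 := by nlinarith
    have expand : 2 * ((q : ℤ) * q * ((q : ℤ) * q - 1)) * (5 * (q : ℤ) + 11)
        - (9 * (q : ℤ) * q - 36 * q + 38) * (((q : ℤ) + 1) * Q2)
        = ((q : ℤ) * ((q : ℤ) * q - 1)) * ((q : ℤ) * q + 58 * q - 38) := by
      rw [hQ2_def]; ring
    nlinarith [mul_pos f1 f2]
  linarith
end

section
/- The metric dimension of the incidence graph of the Möbius plane of order 2 (points {1,...,5}, circles all 3-element subsets) equals 4; moreover every 4-element subset of the point set is a resolving set. -/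
/-!
Any two points lie on a common circle and any two circles meet, so vertices on the same side of
the bipartite incidence graph are at distance 2, and a point off a circle is at distance 3 from it
(a walk of length 3 exists, and parity excludes 2). Seen from a set `A` of points, a point is
therefore recorded by whether it lies in `A`, and a circle `z` by its trace `z ∩ A`.

Lower bound: the circles outside a resolving set `S` are all at distance 2 from the circles of
`S`, so they are told apart only by their traces on the points of `S`. Hence
`10 - #(circles of S) ≤ 2 ^ #(points of S)`, which fails when `#S ≤ 3`.

Upper bound: let `T` miss at most one point. Points (even distances) and circles (odd distances)
are separated by any element of `T`, two distinct points by whichever of them lies in `T`, and two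
distinct circles `z`, `w` by an element of `T` in `z \ w` or in `w \ z`: these sets are nonempty
and disjoint, so they cannot both be contained in the missing point.
-/

open Finset

/-- Vertices of the incidence graph of the Möbius plane of order 2: the 5 points
and the 10 circles (all 3-element subsets of a 5-element set). -/
abbrev MobiusTwoVertex := Fin 5 ⊕ {z : Finset (Fin 5) // z.card = 3}

/-- The point–circle incidence graph of the Möbius plane of order 2. -/
def mobiusTwoGraph : SimpleGraph MobiusTwoVertex where
  Adj v w :=
    (∃ p z, v = Sum.inl p ∧ w = Sum.inr z ∧ p ∈ z.1) ∨
    (∃ p z, v = Sum.inr z ∧ w = Sum.inl p ∧ p ∈ z.1)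
  symm := by
    constructor
    intro v w h
    rcases h with ⟨p, z, h1, h2, h3⟩ | ⟨p, z, h1, h2, h3⟩
    · exact Or.inr ⟨p, z, h2, h1, h3⟩
    · exact Or.inl ⟨p, z, h2, h1, h3⟩
  loopless := by
    constructor
    intro v h
    rcases h with ⟨p, z, h1, h2, _⟩ | ⟨p, z, h1, h2, _⟩ <;> subst h1 <;> simp_all

/-- A set of vertices is resolving if any two distinct vertices have different
distance to some element of the set. -/
def MobiusTwoResolving (S : Finset MobiusTwoVertex) : Prop :=
  ∀ u v : MobiusTwoVertex, u ≠ v →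
    ∃ s ∈ S, mobiusTwoGraph.dist u s ≠ mobiusTwoGraph.dist v s

namespace SimpleGraph

variable {V : Type*} {G : SimpleGraph V} {u v w : V}

lemma dist_eq_two_of_adj_of_adj (hne : u ≠ v) (hnadj : ¬G.Adj u v) (huw : G.Adj u w)
    (hwv : G.Adj w v) : G.dist u v = 2 := by
  have hedist : G.edist u v = 2 :=
    edist_eq_two_iff.mpr ⟨hne, hnadj, w, (G.mem_commonNeighbors).mpr ⟨huw, hwv.symm⟩⟩
  exact_mod_cast (huw.reachable.trans hwv.reachable).coe_dist_eq_edist.trans hedist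

lemma Coloring.odd_dist (c : G.Coloring Bool) (hr : G.Reachable u v) (huv : c u ≠ c v) :
    Odd (G.dist u v) := by
  obtain ⟨p, hp⟩ := hr.exists_walk_length_eq_dist
  rw [← hp, c.odd_length_iff_not_congr]
  cases hu : c u <;> cases hv : c v <;> simp_all

lemma Coloring.dist_eq_three (c : G.Coloring Bool) (huv : c u ≠ c v) (hnadj : ¬G.Adj u v)
    (p : G.Walk u v) (hp : p.length = 3) : G.dist u v = 3 := by
  have hle : G.dist u v ≤ 3 := hp ▸ dist_le p
  have hne : G.dist u v ≠ 1 := mt dist_eq_one_iff_adj.mp hnadj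
  obtain ⟨k, hk⟩ := c.odd_dist p.reachable huv
  omega

end SimpleGraph

namespace Finset

variable {α : Type*}

lemma mem_or_mem_of_card_compl_le_one [Fintype α] [DecidableEq α] {T : Finset α}
    (hT : #Tᶜ ≤ 1) {a b : α} (hab : a ≠ b) : a ∈ T ∨ b ∈ T := by
  by_contra! h
  exact hab (card_le_one.mp hT a (mem_compl.mpr h.1) b (mem_compl.mpr h.2))

lemma exists_mem_notMem_of_card_eq {s t : Finset α} (hst : #s = #t) (hne : s ≠ t) :
    ∃ a ∈ s, a ∉ t :=
  not_subset.mp fun h => hne (eq_of_subset_of_card_le h hst.ge)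

end Finset

section MobiusTwo

variable {p q : Fin 5} {z w : {z : Finset (Fin 5) // z.card = 3}}

@[simp]
lemma mobiusTwoGraph_adj_inl_inr : mobiusTwoGraph.Adj (.inl p) (.inr z) ↔ p ∈ z.1 := by
  refine ⟨?_, fun h => .inl ⟨p, z, rfl, rfl, h⟩⟩
  rintro (⟨q, y, ⟨⟩, ⟨⟩, h⟩ | ⟨_, _, ⟨⟩, _⟩)
  exact h

@[simp]
lemma mobiusTwoGraph_adj_inr_inl : mobiusTwoGraph.Adj (.inr z) (.inl p) ↔ p ∈ z.1 :=
  mobiusTwoGraph.adj_comm _ _ |>.trans mobiusTwoGraph_adj_inl_inr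

@[simp]
lemma mobiusTwoGraph_not_adj_inl_inl : ¬mobiusTwoGraph.Adj (.inl p) (.inl q) := by
  simp [mobiusTwoGraph]

@[simp]
lemma mobiusTwoGraph_not_adj_inr_inr : ¬mobiusTwoGraph.Adj (.inr z) (.inr w) := by
  simp [mobiusTwoGraph]

def mobiusTwoGraph.sideColoring : mobiusTwoGraph.Coloring Bool :=
  SimpleGraph.Coloring.mk Sum.isRight fun {u v} h => by
    rcases u with p | z <;> rcases v with q | w <;> simp_all

lemma exists_circle_mem_mem (p q : Fin 5) : ∃ z : {z : Finset (Fin 5) // z.card = 3},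
    p ∈ z.1 ∧ q ∈ z.1 := by
  obtain ⟨z, hpq, -, hz⟩ := exists_subsuperset_card_eq (subset_univ {p, q})
    (card_le_two.trans (by norm_num : 2 ≤ 3)) (by simp)
  exact ⟨⟨z, hz⟩, hpq (by simp), hpq (by simp)⟩

lemma circle_inter_nonempty (z w : {z : Finset (Fin 5) // z.card = 3}) : (z.1 ∩ w.1).Nonempty :=
  inter_nonempty_of_card_lt_card_add_card (subset_univ _) (subset_univ _) (by simp [z.2, w.2])

@[simp]
lemma mobiusTwoGraph_dist_inl_inl (p q : Fin 5) :
    mobiusTwoGraph.dist (.inl p) (.inl q) = if p = q then 0 else 2 := by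
  split_ifs with hpq
  · simp [hpq]
  · obtain ⟨z, hp, hq⟩ := exists_circle_mem_mem p q
    exact SimpleGraph.dist_eq_two_of_adj_of_adj (by simpa using hpq)
      mobiusTwoGraph_not_adj_inl_inl (mobiusTwoGraph_adj_inl_inr.mpr hp)
      (mobiusTwoGraph_adj_inr_inl.mpr hq)

@[simp]
lemma mobiusTwoGraph_dist_inr_inr (z w : {z : Finset (Fin 5) // z.card = 3}) :
    mobiusTwoGraph.dist (.inr z) (.inr w) = if z = w then 0 else 2 := by
  split_ifs with hzw
  · simp [hzw]
  · obtain ⟨p, hp⟩ := circle_inter_nonempty z w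
    exact SimpleGraph.dist_eq_two_of_adj_of_adj (by simpa using hzw)
      mobiusTwoGraph_not_adj_inr_inr (mobiusTwoGraph_adj_inr_inl.mpr (mem_inter.mp hp).1)
      (mobiusTwoGraph_adj_inl_inr.mpr (mem_inter.mp hp).2)

@[simp]
lemma mobiusTwoGraph_dist_inl_inr (p : Fin 5) (z : {z : Finset (Fin 5) // z.card = 3}) :
    mobiusTwoGraph.dist (.inl p) (.inr z) = if p ∈ z.1 then 1 else 3 := by
  split_ifs with hp
  · exact SimpleGraph.dist_eq_one_iff_adj.mpr (mobiusTwoGraph_adj_inl_inr.mpr hp)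
  · obtain ⟨q, hq⟩ := card_pos.mp (z.2 ▸ three_pos)
    obtain ⟨y, hpy, hqy⟩ := exists_circle_mem_mem p q
    exact mobiusTwoGraph.sideColoring.dist_eq_three Bool.false_ne_true
      (mobiusTwoGraph_adj_inl_inr.not.mpr hp)
      (.cons (mobiusTwoGraph_adj_inl_inr.mpr hpy) <| .cons (mobiusTwoGraph_adj_inr_inl.mpr hqy) <|
        .cons (mobiusTwoGraph_adj_inl_inr.mpr hq) .nil) rfl

@[simp]
lemma mobiusTwoGraph_dist_inr_inl (z : {z : Finset (Fin 5) // z.card = 3}) (p : Fin 5) :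
    mobiusTwoGraph.dist (.inr z) (.inl p) = if p ∈ z.1 then 1 else 3 := by
  rw [SimpleGraph.dist_comm, mobiusTwoGraph_dist_inl_inr]

lemma mobiusTwoGraph_dist_inl_inl_ne_dist_inr_inl (p t : Fin 5)
    (z : {z : Finset (Fin 5) // z.card = 3}) :
    mobiusTwoGraph.dist (.inl p) (.inl t) ≠ mobiusTwoGraph.dist (.inr z) (.inl t) := by
  simp only [mobiusTwoGraph_dist_inl_inl, mobiusTwoGraph_dist_inr_inl]
  split_ifs <;> omega

end MobiusTwo

section Resolving

variable {S : Finset MobiusTwoVertex}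

lemma MobiusTwoResolving.injOn_inter_toLeft (hS : MobiusTwoResolving S) :
    Set.InjOn (fun z : {z : Finset (Fin 5) // z.card = 3} => z.1 ∩ S.toLeft) ↑S.toRightᶜ := by
  intro z hz w hw hzw
  by_contra hne
  obtain ⟨s, hs, hdist⟩ := hS (.inr z) (.inr w) (by simpa using hne)
  rcases s with t | y
  · have ht : t ∈ z.1 ↔ t ∈ w.1 := by simpa [hs] using congrArg (t ∈ ·) hzw
    simp [ht] at hdist
  · have hzy : z ≠ y := by rintro rfl; simp_all
    have hwy : w ≠ y := by rintro rfl; simp_all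
    simp [hzy, hwy] at hdist

lemma MobiusTwoResolving.ten_sub_card_toRight_le (hS : MobiusTwoResolving S) :
    10 - #S.toRight ≤ 2 ^ #S.toLeft :=
  calc 10 - #S.toRight = #S.toRightᶜ := by rw [card_compl, Fintype.card_finset_len]; rfl
    _ ≤ #S.toLeft.powerset :=
      card_le_card_of_injOn _ (fun _ _ => mem_powerset.mpr inter_subset_right) hS.injOn_inter_toLeft
    _ = 2 ^ #S.toLeft := card_powerset _

lemma MobiusTwoResolving.four_le_card (hS : MobiusTwoResolving S) : 4 ≤ #S := by
  have hcount := hS.ten_sub_card_toRight_le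
  rw [← card_toLeft_add_card_toRight]
  by_contra! hlt
  have : #S.toLeft ≤ 3 := by omega
  interval_cases #S.toLeft <;> omega

lemma mobiusTwoResolving_map_inl {T : Finset (Fin 5)} (hT : #Tᶜ ≤ 1) :
    MobiusTwoResolving (T.map ⟨Sum.inl, Sum.inl_injective⟩) := by
  obtain ⟨t, ht⟩ : T.Nonempty := by
    rw [nonempty_iff_ne_empty]
    rintro rfl
    simp at hT
  rintro (p | z) (q | w) huv
  · have hpq : p ≠ q := by simpa using huv
    rcases mem_or_mem_of_card_compl_le_one hT hpq with hp | hq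
    · exact ⟨.inl p, mem_map_of_mem _ hp, by simp [hpq.symm]⟩
    · exact ⟨.inl q, mem_map_of_mem _ hq, by simp [hpq]⟩
  · exact ⟨.inl t, mem_map_of_mem _ ht, mobiusTwoGraph_dist_inl_inl_ne_dist_inr_inl p t w⟩
  · exact ⟨.inl t, mem_map_of_mem _ ht,
      (mobiusTwoGraph_dist_inl_inl_ne_dist_inr_inl q t z).symm⟩
  · have hzw : z.1 ≠ w.1 := by simpa [Subtype.ext_iff] using huv
    obtain ⟨a, haz, haw⟩ := exists_mem_notMem_of_card_eq (z.2.trans w.2.symm) hzw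
    obtain ⟨b, hbw, hbz⟩ := exists_mem_notMem_of_card_eq (w.2.trans z.2.symm) hzw.symm
    rcases mem_or_mem_of_card_compl_le_one hT (ne_of_mem_of_not_mem haz hbz) with ha | hb
    · exact ⟨.inl a, mem_map_of_mem _ ha, by simp [haz, haw]⟩
    · exact ⟨.inl b, mem_map_of_mem _ hb, by simp [hbw, hbz]⟩
end Resolving

/-- The metric dimension of the incidence graph of the Möbius plane of order 2 is 4:
every resolving set has at least 4 elements, and every 4-element subset of the point
set is a resolving set. -/
theorem mobius_two_metric_dimension :
    (∀ S : Finset MobiusTwoVertex, MobiusTwoResolving S → 4 ≤ S.card) ∧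
    (∀ T : Finset (Fin 5), T.card = 4 →
      MobiusTwoResolving (T.map ⟨Sum.inl, Sum.inl_injective⟩)) :=
  ⟨fun _ hS => hS.four_le_card,
    fun T hT => mobiusTwoResolving_map_inl (by rw [card_compl, hT]; rfl)⟩
end
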